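/- arXiv:2007.01429 — 7 statements merged into one kernel-verified Lean document; each statement's English description precedes it below -/
import Mathlib

section
/- Every local minimum of the function f : ℝ × ℝ → ℝ defined by f(v, w) = (vw − 1)² is a global minimum of f (i.e., f attains the value 0 there). -/
private lemma aux0 {h : ℝ → ℝ} (hm : IsLocalMin h 0)
    (hlt : ∀ s : ℝ, 0 < s → s < 1 → h s < h 0) : False := by
  obtain ⟨δ, hδ, hball⟩ := Metric.eventually_nhds_iff.mp hm
  set s : ℝ := min δ 1 / 2 with hs
  have hs0 : 0 < s := by positivity
  have hs1 : s < 1 := by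
    have : min δ 1 ≤ 1 := min_le_right _ _
    linarith
  have hsδ : s < δ := by
    have : min δ 1 ≤ δ := min_le_left _ _
    linarith
  have h1 : h 0 ≤ h s := hball (by simpa [abs_of_pos hs0, Real.dist_eq] using hsδ)
  exact absurd (hlt s hs0 hs1) (not_lt.mpr h1)

/-- Every local minimum of `f (v, w) = (v*w - 1)^2` is a global minimum of `f`,
i.e., `f` attains the value `0` there. -/
theorem stmt0 (p : ℝ × ℝ) (hp : IsLocalMin (fun q : ℝ × ℝ => (q.1 * q.2 - 1) ^ 2) p) :
    (p.1 * p.2 - 1) ^ 2 = 0 ∧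
      ∀ q : ℝ × ℝ, (p.1 * p.2 - 1) ^ 2 ≤ (q.1 * q.2 - 1) ^ 2 := by
  set f : ℝ × ℝ → ℝ := fun q => (q.1 * q.2 - 1) ^ 2 with hf
  have key : p.1 * p.2 - 1 = 0 := by
    by_contra ha
    have ha2 : 0 < (p.1 * p.2 - 1) ^ 2 := by positivity
    rcases eq_or_ne p.2 0 with h2 | h2
    · rcases eq_or_ne p.1 0 with h1 | h1
      · -- p = (0,0) : use curve s ↦ (s, s)
        set c : ℝ → ℝ × ℝ := fun s => (s, s) with hcdef
        have hc : ContinuousAt c 0 := by fun_prop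
        have hp' : IsLocalMin f (c 0) := by
          have : c 0 = p := by simp [hcdef, Prod.ext_iff, h1, h2]
          rw [this]; exact hp
        have hm := hp'.comp_continuous hc
        refine aux0 hm ?_
        intro s hs0 hs1
        simp only [Function.comp, hcdef, hf]
        have hss : s * s < 1 := by nlinarith
        have hss0 : 0 < s * s := mul_pos hs0 hs0
        nlinarith
      · -- p.2 = 0, p.1 ≠ 0 : vary second coordinate
        set c : ℝ → ℝ × ℝ := fun s => (p.1, p.2 + s ^ 2 * (1 - p.1 * p.2) / p.1) with hcdef
        have hc : ContinuousAt c 0 := by fun_prop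
        have hp' : IsLocalMin f (c 0) := by
          have : c 0 = p := by simp [hcdef]
          rw [this]; exact hp
        have hm := hp'.comp_continuous hc
        refine aux0 hm ?_
        intro s hs0 hs1
        simp only [Function.comp, hcdef, hf]
        have hval : ∀ t : ℝ, p.1 * (p.2 + t ^ 2 * (1 - p.1 * p.2) / p.1) - 1
            = (p.1 * p.2 - 1) * (1 - t ^ 2) := by
          intro t; field_simp; ring
        rw [hval s, hval 0]
        have hA : 0 < 1 - s ^ 2 := by nlinarith
        have hB : 1 - s ^ 2 < 1 := by nlinarith
        rw [mul_pow, mul_pow]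
        have : (1 - s ^ 2) ^ 2 < (1 - (0:ℝ) ^ 2) ^ 2 := by nlinarith
        nlinarith
    · -- p.2 ≠ 0 : vary first coordinate
      set c : ℝ → ℝ × ℝ := fun s => (p.1 + s ^ 2 * (1 - p.1 * p.2) / p.2, p.2) with hcdef
      have hc : ContinuousAt c 0 := by fun_prop
      have hp' : IsLocalMin f (c 0) := by
        have : c 0 = p := by simp [hcdef]
        rw [this]; exact hp
      have hm := hp'.comp_continuous hc
      refine aux0 hm ?_
      intro s hs0 hs1
      simp only [Function.comp, hcdef, hf]
      have hval : ∀ t : ℝ, (p.1 + t ^ 2 * (1 - p.1 * p.2) / p.2) * p.2 - 1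
          = (p.1 * p.2 - 1) * (1 - t ^ 2) := by
        intro t; field_simp; ring
      rw [hval s, hval 0]
      have hA : 0 < 1 - s ^ 2 := by nlinarith
      have hB : 1 - s ^ 2 < 1 := by nlinarith
      rw [mul_pow, mul_pow]
      have : (1 - s ^ 2) ^ 2 < (1 - (0:ℝ) ^ 2) ^ 2 := by nlinarith
      nlinarith
  refine ⟨by rw [key]; ring, fun q => ?_⟩
  rw [key]
  simpa using sq_nonneg (q.1 * q.2 - 1)
end

section
/- Consider the deep linear network loss F(W₁, …, W_L) = ‖Y − W_L W_{L−1} ⋯ W₁ X‖_F² with W_i ∈ ℝ^{d_i×d_{i−1}}, d₀ = d_x, d_L = d_y, data X ∈ ℝ^{d_x×n}, Y ∈ ℝ^{d_y×n}. Assume d_x ≤ n, d_y ≤ n, XXᵀ and XYᵀ have full rank, the matrix YXᵀ(XXᵀ)⁻¹X has pairwise distinct singular values, and min_{0≤i≤L} d_i = min{d_x, d_y}. Then every critical point (W₁, …, W_L) of F at which the product W_L ⋯ W₂W₁ has full rank (rank equal to min{d_x, d_y}) is a global minimum of F, and every critical point at which W_L ⋯ W₂W₁ has rank strictly less than min{d_x,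 d_y} is a saddle point of F. -/
noncomputable section

/-- Squared Frobenius norm of a matrix. -/
def frobSq {m n : ℕ} (A : Matrix (Fin m) (Fin n) ℝ) : ℝ := ∑ i, ∑ j, (A i j) ^ 2

/-- Product `W_{l} ⋯ W_2 W_1` of the first `l` layer weight matrices. -/
def dlp (d : ℕ → ℕ) (W : (l : ℕ) → Fin (d (l + 1)) → Fin (d l) → ℝ) :
    (l : ℕ) → Matrix (Fin (d l)) (Fin (d 0)) ℝ
  | 0 => 1
  | l + 1 => Matrix.of (W l) * dlp d W l

/-- Extend a family of `L` weight matrices (indexed by `Fin L`) to an `ℕ`-indexed family. -/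
def extW (L : ℕ) (d : ℕ → ℕ)
    (W : (l : Fin L) → Fin (d ((l : ℕ) + 1)) → Fin (d (l : ℕ)) → ℝ) :
    (l : ℕ) → Fin (d (l + 1)) → Fin (d l) → ℝ :=
  fun l => if h : l < L then W ⟨l, h⟩ else fun _ _ => 0

namespace DLN

open Matrix

/-- entrywise dot product of matrices -/
def dotM {a b : ℕ} (A B : Matrix (Fin a) (Fin b) ℝ) : ℝ := ∑ i, ∑ j, A i j * B i j

lemma frobSq_eq_dotM {a b : ℕ} (A : Matrix (Fin a) (Fin b) ℝ) : frobSq A = dotM A A := by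
  simp [frobSq, dotM, pow_two]

lemma dotM_comm {a b : ℕ} (A B : Matrix (Fin a) (Fin b) ℝ) : dotM A B = dotM B A := by
  simp [dotM, mul_comm]

lemma dotM_self_nonneg {a b : ℕ} (A : Matrix (Fin a) (Fin b) ℝ) : 0 ≤ dotM A A := by
  apply Finset.sum_nonneg; intro i _
  apply Finset.sum_nonneg; intro j _
  exact mul_self_nonneg _

lemma dotM_self_eq_zero {a b : ℕ} (A : Matrix (Fin a) (Fin b) ℝ) (h : dotM A A = 0) :
    A = 0 := by
  ext i j
  have h1 : ∀ i ∈ (Finset.univ : Finset (Fin a)), (0:ℝ) ≤ ∑ j, A i j * A i j := by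
    intro i _; apply Finset.sum_nonneg; intro j _; exact mul_self_nonneg _
  have h2 := (Finset.sum_eq_zero_iff_of_nonneg h1).mp h i (Finset.mem_univ i)
  have h3 : ∀ j ∈ (Finset.univ : Finset (Fin b)), (0:ℝ) ≤ A i j * A i j := by
    intro j _; exact mul_self_nonneg _
  have h4 := (Finset.sum_eq_zero_iff_of_nonneg h3).mp h2 j (Finset.mem_univ j)
  have := mul_self_eq_zero.mp h4
  simpa using this

lemma dotM_self_pos {a b : ℕ} (A : Matrix (Fin a) (Fin b) ℝ) (h : A ≠ 0) : 0 < dotM A A := by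
  rcases lt_or_eq_of_le (dotM_self_nonneg A) with h1 | h1
  · exact h1
  · exact absurd (dotM_self_eq_zero A h1.symm) h

lemma dotM_smul_right {a b : ℕ} (A B : Matrix (Fin a) (Fin b) ℝ) (t : ℝ) :
    dotM A (t • B) = t * dotM A B := by
  simp only [dotM, Finset.mul_sum, Matrix.smul_apply, smul_eq_mul]
  apply Finset.sum_congr rfl; intro i _
  apply Finset.sum_congr rfl; intro j _
  ring

lemma dotM_add_right {a b : ℕ} (A B C : Matrix (Fin a) (Fin b) ℝ) :
    dotM A (B + C) = dotM A B + dotM A C := by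
  simp [dotM, mul_add, Finset.sum_add_distrib]

lemma frobSq_sub {a b : ℕ} (M N : Matrix (Fin a) (Fin b) ℝ) :
    frobSq (M - N) = frobSq M - 2 * dotM M N + frobSq N := by
  simp only [frobSq, dotM, Matrix.sub_apply, Finset.mul_sum,
    ← Finset.sum_sub_distrib, ← Finset.sum_add_distrib]
  apply Finset.sum_congr rfl; intro i _
  apply Finset.sum_congr rfl; intro j _
  ring

lemma sum213 {a b c : ℕ} (f : Fin a → Fin b → Fin c → ℝ) :
    ∑ i, ∑ j, ∑ k, f i j k = ∑ k, ∑ j, ∑ i, f i j k := by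
  calc ∑ i, ∑ j, ∑ k, f i j k
      = ∑ i, ∑ k, ∑ j, f i j k := by
        apply Finset.sum_congr rfl; intro i _; exact Finset.sum_comm
    _ = ∑ k, ∑ i, ∑ j, f i j k := Finset.sum_comm
    _ = ∑ k, ∑ j, ∑ i, f i j k := by
        apply Finset.sum_congr rfl; intro k _; exact Finset.sum_comm

lemma dotM_mul_left {a b c : ℕ} (M : Matrix (Fin a) (Fin b) ℝ)
    (A : Matrix (Fin a) (Fin c) ℝ) (N : Matrix (Fin c) (Fin b) ℝ) :
    dotM M (A * N) = dotM (Aᵀ * M) N := by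
  simp only [dotM, Matrix.mul_apply, Matrix.transpose_apply, Finset.mul_sum, Finset.sum_mul]
  rw [sum213 (fun i j k => M i j * (A i k * N k j))]
  apply Finset.sum_congr rfl; intro k _
  apply Finset.sum_congr rfl; intro j _
  apply Finset.sum_congr rfl; intro i _
  ring

lemma dotM_mul_right {a b c : ℕ} (M : Matrix (Fin a) (Fin b) ℝ)
    (N : Matrix (Fin a) (Fin c) ℝ) (B : Matrix (Fin c) (Fin b) ℝ) :
    dotM M (N * B) = dotM (M * Bᵀ) N := by
  simp only [dotM, Matrix.mul_apply, Matrix.transpose_apply, Finset.mul_sum, Finset.sum_mul]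
  apply Finset.sum_congr rfl; intro i _
  rw [Finset.sum_comm]
  apply Finset.sum_congr rfl; intro k _
  apply Finset.sum_congr rfl; intro j _
  ring

/-- key expansion of the loss -/
lemma expandF {dy dx nn : ℕ} (Y : Matrix (Fin dy) (Fin nn) ℝ) (X : Matrix (Fin dx) (Fin nn) ℝ)
    (P Q : Matrix (Fin dy) (Fin dx) ℝ) :
    frobSq (Y - (P + Q) * X) =
      frobSq (Y - P * X) - 2 * dotM ((Y - P * X) * Xᵀ) Q + frobSq (Q * X) := by
  have h1 : Y - (P + Q) * X = (Y - P * X) - Q * X := by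
    rw [Matrix.add_mul]; abel
  rw [h1, frobSq_sub]
  congr 2
  rw [dotM_mul_right, dotM_comm]

section Chains

variable (d : ℕ → ℕ) (W W' : (l : ℕ) → Fin (d (l + 1)) → Fin (d l) → ℝ)

/-- product of layers `a, a+1, …, l-1` (a "top chain") -/
def uldp (a : ℕ) : (l : ℕ) → Matrix (Fin (d l)) (Fin (d a)) ℝ
  | 0 => if h : a = 0 then (by subst h; exact 1) else 0
  | l + 1 => if h : a = l + 1 then (by subst h; exact 1) else Matrix.of (W l) * uldp a l

@[simp] lemma uldp_self (a : ℕ) : uldp d W a a = 1 := by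
  cases a with
  | zero => simp [uldp]
  | succ l => simp [uldp]

lemma uldp_succ {a l : ℕ} (h : a ≤ l) : uldp d W a (l + 1) = Matrix.of (W l) * uldp d W a l := by
  rw [uldp, dif_neg (by omega)]

lemma uldp_gt {a l : ℕ} (h : l < a) : uldp d W a l = 0 := by
  induction l with
  | zero => rw [uldp, dif_neg (by omega)]
  | succ l ih => rw [uldp, dif_neg (by omega), ih (by omega), Matrix.mul_zero]

lemma dlp_succ (l : ℕ) : dlp d W (l + 1) = Matrix.of (W l) * dlp d W l := rfl

@[simp] lemma dlp_zero : dlp d W 0 = 1 := rfl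

lemma dlp_split {a l : ℕ} (h : a ≤ l) : dlp d W l = uldp d W a l * dlp d W a := by
  induction l, h using Nat.le_induction with
  | base => rw [uldp_self, Matrix.one_mul]
  | succ l hl ih => rw [dlp_succ, ih, uldp_succ d W hl, Matrix.mul_assoc]

lemma dlp_congr (l : ℕ) (h : ∀ j < l, W j = W' j) : dlp d W l = dlp d W' l := by
  induction l with
  | zero => rfl
  | succ l ih =>
      rw [dlp_succ, dlp_succ, h l (by omega), ih (fun j hj => h j (by omega))]

lemma uldp_congr (a : ℕ) (l : ℕ) (h : ∀ j, a ≤ j → j < l → W j = W' j) :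
    uldp d W a l = uldp d W' a l := by
  induction l with
  | zero => cases a with
      | zero => simp
      | succ a => simp [uldp]
  | succ l ih =>
      by_cases ha : a = l + 1
      · subst ha; simp
      · by_cases hal : a ≤ l
        · rw [uldp_succ d W hal, uldp_succ d W' hal, h l hal (by omega),
            ih (fun j h1 h2 => h j h1 (by omega))]
        · rw [uldp, uldp, dif_neg ha, dif_neg ha, uldp_gt d W (by omega), uldp_gt d W' (by omega),
            Matrix.mul_zero, Matrix.mul_zero]

variable {d} {W W'}

/-- perturbing layer `k` by `E`: effect on the products above `k`. -/
lemma pert_dlp {k : ℕ} (E : Fin (d (k + 1)) → Fin (d k) → ℝ)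
    (hk : W' k = fun p q => W k p q + E p q) (hag : ∀ j, j ≠ k → W j = W' j) :
    ∀ l, k + 1 ≤ l →
      dlp d W' l = dlp d W l + uldp d W (k + 1) l * (Matrix.of E * dlp d W k) := by
  intro l hl
  induction l, hl using Nat.le_induction with
  | base =>
      rw [dlp_succ, dlp_succ, uldp_self, Matrix.one_mul,
        dlp_congr d W' W k (fun j hj => (hag j (by omega)).symm), hk]
      have : (Matrix.of fun p q => W k p q + E p q) = Matrix.of (W k) + Matrix.of E := rfl
      rw [this, Matrix.add_mul]
  | succ l hl ih =>
      rw [dlp_succ, dlp_succ, ← hag l (by omega), ih, Matrix.mul_add,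
        uldp_succ d W hl, Matrix.mul_assoc]

/-- perturbing layer `k` by `E`: effect on the top chains starting at `k`. -/
lemma pert_uldp {k : ℕ} (E : Fin (d (k + 1)) → Fin (d k) → ℝ)
    (hk : W' k = fun p q => W k p q + E p q) (hag : ∀ j, j ≠ k → W j = W' j) :
    ∀ l, k + 1 ≤ l →
      uldp d W' k l = uldp d W k l + uldp d W (k + 1) l * Matrix.of E := by
  intro l hl
  induction l, hl using Nat.le_induction with
  | base =>
      rw [uldp_succ d W' (le_refl k), uldp_succ d W (le_refl k)]
      simp only [uldp_self, Matrix.mul_one, Matrix.one_mul]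
      rw [hk]
      rfl
  | succ l hl ih =>
      rw [uldp_succ d W' (by omega), uldp_succ d W (by omega), ← hag l (by omega), ih,
        Matrix.mul_add, uldp_succ d W hl, Matrix.mul_assoc]

end Chains

section Helpers

open Matrix

/-- rank-one (outer product) matrix -/
def outer {a b : ℕ} (c : Fin a → ℝ) (v : Fin b → ℝ) : Matrix (Fin a) (Fin b) ℝ :=
  Matrix.of fun p q => c p * v q

lemma mul_outer {m a b : ℕ} (A : Matrix (Fin m) (Fin a) ℝ) (c : Fin a → ℝ) (v : Fin b → ℝ) :
    A * outer c v = outer (A.mulVec c) v := by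
  ext i q
  simp only [outer, Matrix.mul_apply, Matrix.of_apply, Matrix.mulVec, dotProduct,
    Finset.sum_mul]
  apply Finset.sum_congr rfl; intro p _; ring

lemma outer_mul {a b m : ℕ} (c : Fin a → ℝ) (v : Fin b → ℝ) (B : Matrix (Fin b) (Fin m) ℝ) :
    outer c v * B = outer c (Bᵀ.mulVec v) := by
  ext p j
  simp only [outer, Matrix.mul_apply, Matrix.of_apply, Matrix.mulVec, dotProduct,
    Matrix.transpose_apply, Finset.mul_sum]
  apply Finset.sum_congr rfl; intro q _; ring

lemma transpose_outer {a b : ℕ} (c : Fin a → ℝ) (v : Fin b → ℝ) :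
    (outer c v)ᵀ = outer v c := by
  ext q p; simp [outer, mul_comm]

lemma outer_ne_zero {a b : ℕ} {c : Fin a → ℝ} {v : Fin b → ℝ} (hc : c ≠ 0) (hv : v ≠ 0) :
    outer c v ≠ 0 := by
  obtain ⟨p, hp⟩ := Function.ne_iff.mp hc
  obtain ⟨q, hq⟩ := Function.ne_iff.mp hv
  intro h
  have := congrFun (congrFun h p) q
  simp only [outer, Matrix.of_apply, Matrix.zero_apply] at this
  exact (mul_ne_zero (by simpa using hp) (by simpa using hq)) this

lemma outer_zero_left {a b : ℕ} (v : Fin b → ℝ) : outer (0 : Fin a → ℝ) v = 0 := by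
  ext p q; simp [outer]

lemma outer_zero_right {a b : ℕ} (c : Fin a → ℝ) : outer c (0 : Fin b → ℝ) = 0 := by
  ext p q; simp [outer]

lemma smul_outer {a b : ℕ} (t : ℝ) (c : Fin a → ℝ) (v : Fin b → ℝ) :
    outer (t • c) v = t • outer c v := by
  ext p q; simp [outer, mul_assoc]

/-- matrix not zero gives nonzero entry -/
lemma exists_entry_ne_zero {a b : ℕ} {M : Matrix (Fin a) (Fin b) ℝ} (h : M ≠ 0) :
    ∃ p q, M p q ≠ 0 := by
  by_contra hc
  push_neg at hc
  exact h (by ext p q; simpa using hc p q)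

lemma matrix_rank_eq {a b : ℕ} (A : Matrix (Fin a) (Fin b) ℝ) :
    A.rank = Module.finrank ℝ (LinearMap.range A.mulVecLin) := rfl

lemma rank_nullity {a b : ℕ} (A : Matrix (Fin a) (Fin b) ℝ) :
    A.rank + Module.finrank ℝ (LinearMap.ker A.mulVecLin) = b := by
  rw [matrix_rank_eq]
  have := LinearMap.finrank_range_add_finrank_ker A.mulVecLin
  rwa [Module.finrank_pi, Fintype.card_fin] at this

lemma rank_lt_of_mulVec_eq_zero {a b : ℕ} (A : Matrix (Fin a) (Fin b) ℝ) {v : Fin b → ℝ}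
    (hv : v ≠ 0) (h : A.mulVec v = 0) : A.rank < b := by
  have h1 := rank_nullity A
  have h2 : LinearMap.ker A.mulVecLin ≠ ⊥ := by
    intro hbot
    apply hv
    have hm : v ∈ LinearMap.ker A.mulVecLin := by
      rw [LinearMap.mem_ker, Matrix.mulVecLin_apply]; exact h
    rw [hbot] at hm
    simpa using hm
  have h3 : Module.finrank ℝ (LinearMap.ker A.mulVecLin) ≠ 0 := by
    intro h0
    exact h2 (Submodule.finrank_eq_zero.mp h0)
  omega

lemma exists_mulVec_eq_zero {a b : ℕ} {A : Matrix (Fin a) (Fin b) ℝ} (h : A.rank < b) :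
    ∃ v, v ≠ 0 ∧ A.mulVec v = 0 := by
  have h1 := rank_nullity A
  have h2 : LinearMap.ker A.mulVecLin ≠ ⊥ := by
    intro hbot
    rw [hbot] at h1
    simp only [finrank_bot] at h1
    omega
  obtain ⟨v, hv, hv0⟩ := Submodule.ne_bot_iff _ |>.mp h2
  exact ⟨v, hv0, by rw [LinearMap.mem_ker, Matrix.mulVecLin_apply] at hv; exact hv⟩

lemma col_mul_eq_mulVec {a b c : ℕ} (A : Matrix (Fin a) (Fin b) ℝ)
    (G : Matrix (Fin b) (Fin c) ℝ) (j : Fin c) :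
    (fun i => (A * G) i j) = A.mulVec (fun k => G k j) := by
  ext i; simp [Matrix.mul_apply, Matrix.mulVec, dotProduct]

lemma eq_zero_of_mul_eq_zero_of_rank {a b c : ℕ} (A : Matrix (Fin a) (Fin b) ℝ)
    (h : A.rank = b) (G : Matrix (Fin b) (Fin c) ℝ) (hm : A * G = 0) : G = 0 := by
  have hker : ∀ v : Fin b → ℝ, A.mulVec v = 0 → v = 0 := by
    intro v hv
    by_contra hv0
    exact absurd h (Nat.ne_of_lt (rank_lt_of_mulVec_eq_zero A hv0 hv))
  ext k j
  have h1 : A.mulVec (fun k => G k j) = 0 := by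
    rw [← col_mul_eq_mulVec, hm]; rfl
  have := congrFun (hker _ h1) k
  simpa using this

end Helpers

section Family

open Matrix

variable {L : ℕ} {d : ℕ → ℕ}

lemma extW_apply (W : (l : Fin L) → Fin (d ((l : ℕ) + 1)) → Fin (d (l : ℕ)) → ℝ) (l : Fin L) :
    extW L d W ↑l = W l := by
  simp only [extW, dif_pos l.isLt]

lemma extW_update_ne (W : (l : Fin L) → Fin (d ((l : ℕ) + 1)) → Fin (d (l : ℕ)) → ℝ)
    (l : Fin L) (val : Fin (d ((l : ℕ) + 1)) → Fin (d (l : ℕ)) → ℝ) (j : ℕ) (hj : j ≠ ↑l) :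
    extW L d (Function.update W l val) j = extW L d W j := by
  unfold extW
  by_cases h : j < L
  · rw [dif_pos h, dif_pos h, Function.update_of_ne]
    intro he
    exact hj (congrArg Fin.val he)
  · rw [dif_neg h, dif_neg h]

lemma extW_update_self (W : (l : Fin L) → Fin (d ((l : ℕ) + 1)) → Fin (d (l : ℕ)) → ℝ)
    (l : Fin L) (val : Fin (d ((l : ℕ) + 1)) → Fin (d (l : ℕ)) → ℝ) :
    extW L d (Function.update W l val) ↑l = val := by
  have h := extW_apply (Function.update W l val) l
  rwa [Function.update_self] at h

def singleF (L : ℕ) (d : ℕ → ℕ) (l : Fin L) (E : Fin (d ((l : ℕ) + 1)) → Fin (d (l : ℕ)) → ℝ) :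
    (l : Fin L) → Fin (d ((l : ℕ) + 1)) → Fin (d (l : ℕ)) → ℝ :=
  Pi.single (M := fun l : Fin L => Fin (d ((l : ℕ) + 1)) → Fin (d (l : ℕ)) → ℝ) l E

lemma update_eq_add_single (W : (l : Fin L) → Fin (d ((l : ℕ) + 1)) → Fin (d (l : ℕ)) → ℝ)
    (l : Fin L) (E : Fin (d ((l : ℕ) + 1)) → Fin (d (l : ℕ)) → ℝ) (t : ℝ) :
    Function.update W l (fun p q => W l p q + t * E p q) = W + t • singleF L d l E := by
  funext j
  by_cases h : j = l
  · subst h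
    rw [Function.update_self]
    have : (W + t • singleF L d j E) j = W j + t • E := by
      simp [singleF, Pi.single_eq_same]
    rw [this]
    rfl
  · rw [Function.update_of_ne h]
    have : (W + t • singleF L d l E) j = W j
        + t • (0 : Fin (d ((j : ℕ) + 1)) → Fin (d (j : ℕ)) → ℝ) := by
      simp [singleF, Pi.single_eq_of_ne h]
    rw [this, smul_zero, add_zero]

lemma dist_update_le (W : (l : Fin L) → Fin (d ((l : ℕ) + 1)) → Fin (d (l : ℕ)) → ℝ)
    (l : Fin L) (x : Fin (d ((l : ℕ) + 1)) → Fin (d (l : ℕ)) → ℝ) :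
    dist (Function.update W l x) W ≤ dist x (W l) := by
  refine (dist_pi_le_iff dist_nonneg).mpr fun j => ?_
  by_cases h : j = l
  · subst h; rw [Function.update_self]
  · rw [Function.update_of_ne h, dist_self]; exact dist_nonneg

lemma diff_eval (l : Fin L) (i : Fin (d ((l : ℕ) + 1))) (q : Fin (d (l : ℕ))) :
    Differentiable ℝ
      (fun W : (l : Fin L) → Fin (d ((l : ℕ) + 1)) → Fin (d (l : ℕ)) → ℝ => W l i q) := by
  have h1 : Differentiable ℝ
      (fun W : (l : Fin L) → Fin (d ((l : ℕ) + 1)) → Fin (d (l : ℕ)) → ℝ => W l) :=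
    (ContinuousLinearMap.proj (R := ℝ)
      (φ := fun l : Fin L => Fin (d ((l : ℕ) + 1)) → Fin (d (l : ℕ)) → ℝ) l).differentiable
  have h2 : Differentiable ℝ (fun g : Fin (d ((l : ℕ) + 1)) → Fin (d (l : ℕ)) → ℝ => g i q) :=
    ((ContinuousLinearMap.proj (R := ℝ) (φ := fun _ : Fin (d (l : ℕ)) => ℝ) q).differentiable).comp
      ((ContinuousLinearMap.proj (R := ℝ)
        (φ := fun _ : Fin (d ((l : ℕ) + 1)) => Fin (d (l : ℕ)) → ℝ) i).differentiable)
  exact h2.comp h1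

lemma diff_dlp_entry (L : ℕ) (d : ℕ → ℕ) :
    ∀ (lv : ℕ) (i : Fin (d lv)) (k : Fin (d 0)),
      Differentiable ℝ
        (fun W : (l : Fin L) → Fin (d ((l : ℕ) + 1)) → Fin (d (l : ℕ)) → ℝ =>
          dlp d (extW L d W) lv i k) := by
  intro lv
  induction lv with
  | zero =>
      intro i k
      exact differentiable_const ((1 : Matrix (Fin (d 0)) (Fin (d 0)) ℝ) i k)
  | succ lv ih =>
      intro i k
      have hfe : (fun W : (l : Fin L) → Fin (d ((l : ℕ) + 1)) → Fin (d (l : ℕ)) → ℝ =>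
            dlp d (extW L d W) (lv + 1) i k)
          = fun W => ∑ q, extW L d W lv i q * dlp d (extW L d W) lv q k := by
        funext W
        rw [dlp_succ]
        simp [Matrix.mul_apply]
      rw [hfe]
      apply Differentiable.fun_sum
      intro q _
      by_cases h : lv < L
      · have he : ∀ W : (l : Fin L) → Fin (d ((l : ℕ) + 1)) → Fin (d (l : ℕ)) → ℝ,
            extW L d W lv i q = W ⟨lv, h⟩ i q := by
          intro W; simp only [extW, dif_pos h]
        simp only [he]
        exact (diff_eval ⟨lv, h⟩ i q).mul (ih q k)
      · have he : ∀ W : (l : Fin L) → Fin (d ((l : ℕ) + 1)) → Fin (d (l : ℕ)) → ℝ,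
            extW L d W lv i q = 0 := by
          intro W; simp only [extW, dif_neg h]
        simp only [he, zero_mul]
        exact differentiable_const 0

lemma diff_F (L n : ℕ) (d : ℕ → ℕ) (X : Matrix (Fin (d 0)) (Fin n) ℝ)
    (Y : Matrix (Fin (d L)) (Fin n) ℝ) :
    Differentiable ℝ
      (fun W : (l : Fin L) → Fin (d ((l : ℕ) + 1)) → Fin (d (l : ℕ)) → ℝ =>
        frobSq (Y - dlp d (extW L d W) L * X)) := by
  have hfe : (fun W : (l : Fin L) → Fin (d ((l : ℕ) + 1)) → Fin (d (l : ℕ)) → ℝ =>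
        frobSq (Y - dlp d (extW L d W) L * X))
      = fun W => ∑ i, ∑ j, (Y i j - ∑ k, dlp d (extW L d W) L i k * X k j) ^ 2 := by
    funext W
    simp [frobSq, Matrix.sub_apply, Matrix.mul_apply]
  rw [hfe]
  apply Differentiable.fun_sum; intro i _
  apply Differentiable.fun_sum; intro j _
  apply Differentiable.pow
  apply Differentiable.sub (differentiable_const _)
  apply Differentiable.fun_sum; intro k _
  exact (diff_dlp_entry L d L i k).mul (differentiable_const _)

end Family

section Expand

open Matrix

lemma frobSq_smul {a b : ℕ} (t : ℝ) (M : Matrix (Fin a) (Fin b) ℝ) :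
    frobSq (t • M) = t ^ 2 * frobSq M := by
  simp only [frobSq, Matrix.smul_apply, smul_eq_mul, mul_pow, Finset.mul_sum]

lemma of_smul_fun {a b : ℕ} (t : ℝ) (E : Fin a → Fin b → ℝ) :
    Matrix.of (fun p q => t * E p q) = t • Matrix.of E := by
  ext p q; simp

variable {L n : ℕ} {d : ℕ → ℕ}

lemma F_update (X : Matrix (Fin (d 0)) (Fin n) ℝ) (Y : Matrix (Fin (d L)) (Fin n) ℝ)
    (W : (l : Fin L) → Fin (d ((l : ℕ) + 1)) → Fin (d (l : ℕ)) → ℝ) (l : Fin L)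
    (E : Fin (d ((l : ℕ) + 1)) → Fin (d (l : ℕ)) → ℝ) (t : ℝ) :
    frobSq (Y - dlp d (extW L d (Function.update W l (fun p q => W l p q + t * E p q))) L * X)
      = frobSq (Y - dlp d (extW L d W) L * X)
        - 2 * t * dotM ((Y - dlp d (extW L d W) L * X) * Xᵀ)
            (uldp d (extW L d W) ((l : ℕ) + 1) L * (Matrix.of E * dlp d (extW L d W) (l : ℕ)))
        + t ^ 2 * frobSq ((uldp d (extW L d W) ((l : ℕ) + 1) L
            * (Matrix.of E * dlp d (extW L d W) (l : ℕ))) * X) := by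
  have hk : extW L d (Function.update W l (fun p q => W l p q + t * E p q)) (l : ℕ)
      = fun p q => extW L d W (l : ℕ) p q + t * E p q := by
    rw [extW_update_self, extW_apply]
  have hag : ∀ j, j ≠ (l : ℕ) →
      extW L d W j = extW L d (Function.update W l (fun p q => W l p q + t * E p q)) j :=
    fun j hj => (extW_update_ne W l _ j hj).symm
  have hp := pert_dlp (W := extW L d W)
    (W' := extW L d (Function.update W l (fun p q => W l p q + t * E p q)))
    (fun p q => t * E p q) hk hag L l.isLt
  rw [hp, of_smul_fun, Matrix.smul_mul, Matrix.mul_smul]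
  rw [expandF Y X (dlp d (extW L d W) L)
    (t • (uldp d (extW L d W) ((l : ℕ) + 1) L * (Matrix.of E * dlp d (extW L d W) (l : ℕ))))]
  rw [dotM_smul_right, Matrix.smul_mul, frobSq_smul]
  ring

lemma crit_extract (hL : 1 ≤ L)
    (X : Matrix (Fin (d 0)) (Fin n) ℝ) (Y : Matrix (Fin (d L)) (Fin n) ℝ)
    (F : ((l : Fin L) → Fin (d ((l : ℕ) + 1)) → Fin (d (l : ℕ)) → ℝ) → ℝ)
    (hF : F = fun W => frobSq (Y - dlp d (extW L d W) L * X))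
    (What : (l : Fin L) → Fin (d ((l : ℕ) + 1)) → Fin (d (l : ℕ)) → ℝ)
    (hcrit : fderiv ℝ F What = 0) (l : Fin L)
    (E : Fin (d ((l : ℕ) + 1)) → Fin (d (l : ℕ)) → ℝ) :
    dotM ((Y - dlp d (extW L d What) L * X) * Xᵀ)
      (uldp d (extW L d What) ((l : ℕ) + 1) L
        * (Matrix.of E * dlp d (extW L d What) (l : ℕ))) = 0 := by
  set α := dotM ((Y - dlp d (extW L d What) L * X) * Xᵀ)
    (uldp d (extW L d What) ((l : ℕ) + 1) L * (Matrix.of E * dlp d (extW L d What) (l : ℕ)))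
    with hα
  set β := frobSq ((uldp d (extW L d What) ((l : ℕ) + 1) L
    * (Matrix.of E * dlp d (extW L d What) (l : ℕ))) * X) with hβ
  set c := frobSq (Y - dlp d (extW L d What) L * X) with hc
  set D := singleF L d l E with hD
  have hdiff : DifferentiableAt ℝ F What := by
    rw [hF]; exact (diff_F L n d X Y).differentiableAt
  have hγ : HasDerivAt (fun t : ℝ => What + t • D) D 0 := by
    have h1 : HasDerivAt (fun t : ℝ => t • D) ((1 : ℝ) • D) 0 := (hasDerivAt_id 0).smul_const D
    simpa using h1.const_add What
  have h0 : What + (0 : ℝ) • D = What := by simp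
  have hfd : HasFDerivAt F (fderiv ℝ F What) (What + (0 : ℝ) • D) := by
    rw [h0]; exact hdiff.hasFDerivAt
  have hcomp : HasDerivAt (fun t : ℝ => F (What + t • D)) ((fderiv ℝ F What) D) 0 :=
    hfd.comp_hasDerivAt 0 hγ
  have hquad : (fun t : ℝ => F (What + t • D)) = fun t => c - 2 * t * α + t ^ 2 * β := by
    funext t
    rw [← update_eq_add_single What l E t, hF]
    exact F_update X Y What l E t
  rw [hquad] at hcomp
  have h1 : HasDerivAt (fun t : ℝ => 2 * t * α) (2 * α) 0 := by
    have := (hasDerivAt_id (0 : ℝ)).const_mul 2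
    have h2 := this.mul_const α
    simpa using h2
  have h2 : HasDerivAt (fun t : ℝ => t ^ 2 * β) 0 0 := by
    have := (hasDerivAt_pow 2 (0 : ℝ)).mul_const β
    simpa using this
  have h3 : HasDerivAt (fun t : ℝ => c - 2 * t * α + t ^ 2 * β) (-(2 * α)) 0 := by
    have := ((hasDerivAt_const (0 : ℝ) c).sub h1).add h2
    simp only [zero_sub, add_zero] at this; exact this
  have huniq := h3.unique hcomp
  rw [hcrit] at huniq
  simp only [ContinuousLinearMap.zero_apply] at huniq
  linarith

end Expand

section Part1

open Matrix

variable {L n : ℕ} {d : ℕ → ℕ}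

lemma dotM_rearrange {dy dx a b : ℕ} (G : Matrix (Fin dy) (Fin dx) ℝ)
    (U : Matrix (Fin dy) (Fin a) ℝ) (E : Matrix (Fin a) (Fin b) ℝ)
    (B : Matrix (Fin b) (Fin dx) ℝ) :
    dotM G (U * (E * B)) = dotM (Uᵀ * (G * Bᵀ)) E := by
  rw [← Matrix.mul_assoc, dotM_mul_right, dotM_mul_left]

lemma part1 (hL : 1 ≤ L)
    (X : Matrix (Fin (d 0)) (Fin n) ℝ) (Y : Matrix (Fin (d L)) (Fin n) ℝ)
    (F : ((l : Fin L) → Fin (d ((l : ℕ) + 1)) → Fin (d (l : ℕ)) → ℝ) → ℝ)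
    (hF : F = fun W => frobSq (Y - dlp d (extW L d W) L * X))
    (What : (l : Fin L) → Fin (d ((l : ℕ) + 1)) → Fin (d (l : ℕ)) → ℝ)
    (hcrit : fderiv ℝ F What = 0)
    (hrank : (dlp d (extW L d What) L).rank = min (d 0) (d L)) :
    ∀ W, F What ≤ F W := by
  have hG : (Y - dlp d (extW L d What) L * X) * Xᵀ = 0 := by
    rcases le_total (d L) (d 0) with hc | hc
    · -- bottleneck is the output layer; use criticality at layer 0
      have hmin : min (d 0) (d L) = d L := min_eq_right hc
      have hsplit : dlp d (extW L d What) L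
          = uldp d (extW L d What) 1 L * dlp d (extW L d What) 1 :=
        dlp_split d (extW L d What) hL
      have hr1 : d L ≤ (uldp d (extW L d What) 1 L).rank := by
        calc d L = (dlp d (extW L d What) L).rank := (hrank.trans hmin).symm
          _ ≤ _ := by rw [hsplit]; exact Matrix.rank_mul_le_left _ _
      have hr2 : (uldp d (extW L d What) 1 L).rank ≤ d L := by
        simpa using Matrix.rank_le_card_height (uldp d (extW L d What) 1 L)
      have hrA : (uldp d (extW L d What) 1 L).rank = d L := le_antisymm hr2 hr1
      have hAg : (uldp d (extW L d What) 1 L)ᵀ * ((Y - dlp d (extW L d What) L * X) * Xᵀ)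
          = 0 := by
        set G := (Y - dlp d (extW L d What) L * X) * Xᵀ with hGdef
        set A := uldp d (extW L d What) 1 L with hAdef
        have h := crit_extract hL X Y F hF What hcrit ⟨0, hL⟩
          (fun p q => (Aᵀ * G) p q)
        simp only [Fin.val_mk] at h
        rw [dlp_zero, Matrix.mul_one, ← hGdef, ← hAdef] at h
        have hofeq : Matrix.of (fun p q => (Aᵀ * G) p q) = Aᵀ * G := rfl
        rw [hofeq, dotM_mul_left] at h
        exact dotM_self_eq_zero _ h
      exact eq_zero_of_mul_eq_zero_of_rank (uldp d (extW L d What) 1 L)ᵀ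
        (by rw [Matrix.rank_transpose]; exact hrA) _ hAg
    · -- bottleneck is the input layer; use criticality at layer L-1
      obtain ⟨L', rfl⟩ : ∃ L', L = L' + 1 := ⟨L - 1, by omega⟩
      have hmin : min (d 0) (d (L' + 1)) = d 0 := min_eq_left hc
      set Wn := extW (L' + 1) d What with hWn
      have hsplit : dlp d Wn (L' + 1) = uldp d Wn L' (L' + 1) * dlp d Wn L' :=
        dlp_split d Wn (by omega)
      have hr1 : d 0 ≤ (dlp d Wn L').rank := by
        calc d 0 = (dlp d Wn (L' + 1)).rank := (hrank.trans hmin).symm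
          _ ≤ _ := by rw [hsplit]; exact Matrix.rank_mul_le_right _ _
      have hr2 : (dlp d Wn L').rank ≤ d 0 := by
        simpa using Matrix.rank_le_card_width (dlp d Wn L')
      have hrB : (dlp d Wn L').rank = d 0 := le_antisymm hr2 hr1
      set G := (Y - dlp d Wn (L' + 1) * X) * Xᵀ with hGdef
      have hBg : G * (dlp d Wn L')ᵀ = 0 := by
        set B := dlp d Wn L' with hBdef
        have h := crit_extract (by omega) X Y F hF What hcrit ⟨L', by omega⟩
          (fun p q => (G * Bᵀ) p q)
        simp only [Fin.val_mk] at h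
        rw [uldp_self, Matrix.one_mul, ← hBdef, ← hGdef] at h
        have hofeq : Matrix.of (fun p q => (G * Bᵀ) p q) = G * Bᵀ := rfl
        rw [hofeq, dotM_mul_right] at h
        exact dotM_self_eq_zero _ h
      have hgt : dlp d Wn L' * Gᵀ = 0 := by
        have := congrArg Matrix.transpose hBg
        rwa [Matrix.transpose_mul, Matrix.transpose_transpose, Matrix.transpose_zero] at this
      have : Gᵀ = 0 :=
        eq_zero_of_mul_eq_zero_of_rank (dlp d Wn L') hrB Gᵀ hgt
      calc G = Gᵀᵀ := (Matrix.transpose_transpose G).symm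
        _ = 0 := by rw [this, Matrix.transpose_zero]
  -- now conclude global minimality
  intro W
  rw [hF]
  show frobSq (Y - dlp d (extW L d What) L * X) ≤ frobSq (Y - dlp d (extW L d W) L * X)
  have hq : dlp d (extW L d W) L
      = dlp d (extW L d What) L + (dlp d (extW L d W) L - dlp d (extW L d What) L) := by
    abel
  rw [hq, expandF, hG]
  have h0 : dotM ((0 : Matrix (Fin (d L)) (Fin (d 0)) ℝ))
      (dlp d (extW L d W) L - dlp d (extW L d What) L) = 0 := by
    simp [dotM]
  have h1 : 0 ≤ frobSq ((dlp d (extW L d W) L - dlp d (extW L d What) L) * X) := by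
    rw [frobSq_eq_dotM]; exact dotM_self_nonneg _
  rw [h0]
  linarith

end Part1

section Part2

open Matrix

variable {L n : ℕ} {d : ℕ → ℕ}

lemma dist_update_pert (W : (l : Fin L) → Fin (d ((l : ℕ) + 1)) → Fin (d (l : ℕ)) → ℝ)
    (l : Fin L) (E : Fin (d ((l : ℕ) + 1)) → Fin (d (l : ℕ)) → ℝ) (t : ℝ) :
    dist (Function.update W l (fun p q => W l p q + t * E p q)) W ≤ |t| * ‖E‖ := by
  refine (dist_update_le W l _).trans ?_
  rw [dist_eq_norm]
  have h1 : (fun p q => W l p q + t * E p q) - W l = t • E := by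
    funext p q; simp [Pi.sub_apply]
  rw [h1, norm_smul, Real.norm_eq_abs]

/-- Primal construction (case `d L ≤ d 0`): starting from any point whose residual
correlation `G` is nonzero, one can find arbitrarily close points with the same product
at which some layer-gradient is nonzero. -/
lemma primal (hL : 1 ≤ L)
    (What : (l : Fin L) → Fin (d ((l : ℕ) + 1)) → Fin (d (l : ℕ)) → ℝ)
    (G : Matrix (Fin (d L)) (Fin (d 0)) ℝ)
    (hG : G ≠ 0) (hthin' : ∀ i ≤ L, d L ≤ d i) :
    ∀ k, k ≤ L - 1 → ∀ ε > 0, ∃ W',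
      dist W' What < ε ∧
      (∀ j : Fin L, k ≤ (j : ℕ) → W' j = What j) ∧
      dlp d (extW L d W') L = dlp d (extW L d What) L ∧
      (G * (dlp d (extW L d W') k)ᵀ ≠ 0 ∨
        ∃ l : Fin L,
          (uldp d (extW L d W') ((l : ℕ) + 1) L)ᵀ * (G * (dlp d (extW L d W') (l : ℕ))ᵀ) ≠ 0) := by
  intro k
  induction k with
  | zero =>
      intro _ ε hε
      refine ⟨What, by simpa using hε, fun j _ => rfl, rfl, Or.inl ?_⟩
      rw [dlp_zero, Matrix.transpose_one, Matrix.mul_one]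
      exact hG
  | succ k ih =>
      intro hk ε hε
      obtain ⟨W', hdist, hagg, hprod, hdisj⟩ := ih (by omega) (ε / 2) (by positivity)
      have hhalf : dist W' What < ε := lt_of_lt_of_le hdist (by linarith)
      rcases hdisj with hD0 | hgrad
      swap
      · exact ⟨W', hhalf, fun j hj => hagg j (by omega), hprod, Or.inr hgrad⟩
      by_cases hnext : G * (dlp d (extW L d W') (k + 1))ᵀ ≠ 0
      · exact ⟨W', hhalf, fun j hj => hagg j (by omega), hprod, Or.inl hnext⟩
      push_neg at hnext
      have hkL : k < L := by omega
      by_cases hgradk : (uldp d (extW L d W') (k + 1) L)ᵀ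
          * (G * (dlp d (extW L d W') k)ᵀ) ≠ 0
      · exact ⟨W', hhalf, fun j hj => hagg j (by omega), hprod,
          Or.inr ⟨⟨k, hkL⟩, hgradk⟩⟩
      push_neg at hgradk
      set Wn' := extW L d W' with hWn'
      set A := uldp d Wn' (k + 1) L with hA
      set B := dlp d Wn' k with hB
      set D0 := G * Bᵀ with hD0def
      -- extract a kernel vector of A
      obtain ⟨p0, q0, hpq⟩ := exists_entry_ne_zero hD0
      have hvz : Aᵀ.mulVec (fun i => D0 i q0) = 0 := by
        rw [← col_mul_eq_mulVec Aᵀ D0 q0, hgradk]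
        rfl
      have hvne : (fun i => D0 i q0) ≠ 0 := by
        intro h
        exact hpq (by simpa using congrFun h p0)
      have hrAT : Aᵀ.rank < d L := rank_lt_of_mulVec_eq_zero Aᵀ hvne hvz
      have hrA : A.rank < d (k + 1) := by
        have h1 := Matrix.rank_transpose A
        have h2 := hthin' (k + 1) (by omega)
        omega
      obtain ⟨c, hc0, hcA⟩ := exists_mulVec_eq_zero hrA
      set bb : Fin (d k) → ℝ := Pi.single q0 1 with hbb
      set E0 : Matrix (Fin (d (k + 1))) (Fin (d k)) ℝ := outer c bb with hE0
      set E0f : Fin (d (k + 1)) → Fin (d k) → ℝ := fun p q => E0 p q with hE0f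
      set δ : ℝ := ε / (2 * (‖E0f‖ + 1)) with hδ
      have hδpos : 0 < δ := by
        apply div_pos hε
        have : (0:ℝ) ≤ ‖E0f‖ := norm_nonneg _
        linarith
      set lk : Fin L := ⟨k, hkL⟩ with hlk
      set W'' := Function.update W' lk (fun p q => W' lk p q + δ * E0f p q) with hW''
      -- perturbation lemmas
      have hkup : extW L d W'' (k : ℕ) = fun p q => Wn' (k : ℕ) p q + δ * E0f p q := by
        rw [hW'']
        have := extW_update_self W' lk (fun p q => W' lk p q + δ * E0f p q)
        rw [this]
        rw [hWn']
        have h2 := extW_apply W' lk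
        rw [h2]
      have hagk : ∀ j, j ≠ (k : ℕ) → Wn' j = extW L d W'' j := by
        intro j hj
        rw [hW'', hWn']
        exact (extW_update_ne W' lk _ j hj).symm
      have hofE : Matrix.of (fun p q => δ * E0f p q) = outer (δ • c) bb := by
        ext p q
        simp [hE0f, hE0, outer, mul_assoc]
      have hpmain := pert_dlp (W := Wn') (W' := extW L d W'')
        (fun p q => δ * E0f p q) hkup hagk
      -- the product is preserved
      have hAE : A * Matrix.of (fun p q => δ * E0f p q) = 0 := by
        rw [hofE, mul_outer, Matrix.mulVec_smul, hcA, smul_zero, outer_zero_left]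
      have hprod'' : dlp d (extW L d W'') L = dlp d (extW L d What) L := by
        rw [hpmain L (by omega), ← Matrix.mul_assoc, ← hA, hAE, Matrix.zero_mul,
          add_zero, hprod]
      -- the invariant advances
      have hinv : G * (dlp d (extW L d W'') (k + 1))ᵀ ≠ 0 := by
        have hstep := hpmain (k + 1) (le_refl _)
        rw [uldp_self, Matrix.one_mul] at hstep
        rw [hstep, Matrix.transpose_add, Matrix.mul_add, hnext, zero_add,
          hofE, Matrix.transpose_mul, transpose_outer, ← Matrix.mul_assoc, ← hB,
          ← hD0def, mul_outer]
        apply outer_ne_zero _ (smul_ne_zero (ne_of_gt hδpos) hc0)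
        have hDb : D0.mulVec bb = fun i => D0 i q0 := by
          rw [hbb]
          simp [Matrix.mulVec_single]
          rfl
        rw [hDb]
        exact hvne
      refine ⟨W'', ?_, ?_, hprod'', Or.inl hinv⟩
      · -- distance
        have hd1 : dist W'' W' ≤ |δ| * ‖E0f‖ := dist_update_pert W' lk E0f δ
        have hd2 : |δ| * ‖E0f‖ < ε / 2 := by
          rw [abs_of_pos hδpos, hδ]
          have hE0nn : (0:ℝ) ≤ ‖E0f‖ := norm_nonneg _
          rw [div_mul_eq_mul_div, div_lt_iff₀ (by linarith)]
          nlinarith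
        calc dist W'' What ≤ dist W'' W' + dist W' What := dist_triangle _ _ _
          _ < ε / 2 + ε / 2 := by
              apply add_lt_add (lt_of_le_of_lt hd1 hd2) hdist
          _ = ε := by ring
      · -- agreement above k+1
        intro j hj
        have hjne : j ≠ lk := by
          intro hee
          rw [hee] at hj
          have hval : (lk : ℕ) = k := rfl
          omega
        rw [hW'', Function.update_of_ne hjne, hagg j (by omega)]

/-- Dual construction (case `d 0 ≤ d L`). -/
lemma dual (hL : 1 ≤ L)
    (What : (l : Fin L) → Fin (d ((l : ℕ) + 1)) → Fin (d (l : ℕ)) → ℝ)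
    (G : Matrix (Fin (d L)) (Fin (d 0)) ℝ)
    (hG : G ≠ 0) (hthin' : ∀ i ≤ L, d 0 ≤ d i) :
    ∀ i k, k + i = L → 1 ≤ k → ∀ ε > 0, ∃ W',
      dist W' What < ε ∧
      (∀ j : Fin L, (j : ℕ) < k → W' j = What j) ∧
      dlp d (extW L d W') L = dlp d (extW L d What) L ∧
      ((uldp d (extW L d W') k L)ᵀ * G ≠ 0 ∨
        ∃ l : Fin L,
          (uldp d (extW L d W') ((l : ℕ) + 1) L)ᵀ * (G * (dlp d (extW L d W') (l : ℕ))ᵀ) ≠ 0) := by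
  intro i
  induction i with
  | zero =>
      intro k heq hk1 ε hε
      have hkL : k = L := by omega
      subst hkL
      refine ⟨What, by simpa using hε, fun j _ => rfl, rfl, Or.inl ?_⟩
      rw [uldp_self, Matrix.transpose_one, Matrix.one_mul]
      exact hG
  | succ i ih =>
      intro k heq hk1 ε hε
      obtain ⟨W', hdist, hagg, hprod, hdisj⟩ := ih (k + 1) (by omega) (by omega)
        (ε / 2) (by positivity)
      have hhalf : dist W' What < ε := lt_of_lt_of_le hdist (by linarith)
      rcases hdisj with hM | hgrad
      swap
      · exact ⟨W', hhalf, fun j hj => hagg j (by omega), hprod, Or.inr hgrad⟩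
      by_cases hold : (uldp d (extW L d W') k L)ᵀ * G ≠ 0
      · exact ⟨W', hhalf, fun j hj => hagg j (by omega), hprod, Or.inl hold⟩
      push_neg at hold
      have hkL : k < L := by omega
      by_cases hgradk : (uldp d (extW L d W') (k + 1) L)ᵀ
          * (G * (dlp d (extW L d W') k)ᵀ) ≠ 0
      · exact ⟨W', hhalf, fun j hj => hagg j (by omega), hprod,
          Or.inr ⟨⟨k, hkL⟩, hgradk⟩⟩
      push_neg at hgradk
      set Wn' := extW L d W' with hWn'
      set B := dlp d Wn' k with hB
      set M := (uldp d Wn' (k + 1) L)ᵀ * G with hM2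
      -- B * Mᵀ = 0
      have hzz : M * Bᵀ = 0 := by
        rw [hM2, Matrix.mul_assoc]
        exact hgradk
      have hBMt : B * Mᵀ = 0 := by
        have := congrArg Matrix.transpose hzz
        rwa [Matrix.transpose_mul, Matrix.transpose_transpose, Matrix.transpose_zero] at this
      obtain ⟨p0, j0, hpj⟩ := exists_entry_ne_zero hM
      have hwz : B.mulVec (fun q => M p0 q) = 0 := by
        have h1 := col_mul_eq_mulVec B Mᵀ p0
        have h2 : (fun q => Mᵀ q p0) = fun q => M p0 q := rfl
        rw [h2] at h1
        rw [← h1, hBMt]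
        rfl
      have hwne : (fun q => M p0 q) ≠ 0 := by
        intro h
        exact hpj (by simpa using congrFun h j0)
      have hrB : B.rank < d 0 := rank_lt_of_mulVec_eq_zero B hwne hwz
      have hrBT : Bᵀ.rank < d k := by
        have h1 := Matrix.rank_transpose B
        have h2 := hthin' k (by omega)
        omega
      obtain ⟨bb, hbb0, hbbB⟩ := exists_mulVec_eq_zero hrBT
      set c0 : Fin (d (k + 1)) → ℝ := Pi.single p0 1 with hc0
      set E0f : Fin (d (k + 1)) → Fin (d k) → ℝ := fun p q => c0 p * bb q with hE0f
      set δ : ℝ := ε / (2 * (‖E0f‖ + 1)) with hδ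
      have hδpos : 0 < δ := by
        apply div_pos hε
        have : (0:ℝ) ≤ ‖E0f‖ := norm_nonneg _
        linarith
      set lk : Fin L := ⟨k, hkL⟩ with hlk
      set W'' := Function.update W' lk (fun p q => W' lk p q + δ * E0f p q) with hW''
      have hkup : extW L d W'' (k : ℕ) = fun p q => Wn' (k : ℕ) p q + δ * E0f p q := by
        rw [hW'']
        have := extW_update_self W' lk (fun p q => W' lk p q + δ * E0f p q)
        rw [this, hWn']
        have h2 := extW_apply W' lk
        rw [h2]
      have hagk : ∀ j, j ≠ (k : ℕ) → Wn' j = extW L d W'' j := by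
        intro j hj
        rw [hW'', hWn']
        exact (extW_update_ne W' lk _ j hj).symm
      have hofE : Matrix.of (fun p q => δ * E0f p q) = outer (δ • c0) bb := by
        ext p q
        simp [hE0f, outer, mul_assoc]
      -- product preserved
      have hpmain := pert_dlp (W := Wn') (W' := extW L d W'')
        (fun p q => δ * E0f p q) hkup hagk
      have hEB : Matrix.of (fun p q => δ * E0f p q) * B = 0 := by
        rw [hofE, outer_mul, hbbB, outer_zero_right]
      have hprod'' : dlp d (extW L d W'') L = dlp d (extW L d What) L := by
        rw [hpmain L (by omega), ← hB, hEB, Matrix.mul_zero, add_zero, hprod]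
      -- invariant advances
      have hup := pert_uldp (W := Wn') (W' := extW L d W'')
        (fun p q => δ * E0f p q) hkup hagk L (by omega)
      have hinv : (uldp d (extW L d W'') k L)ᵀ * G ≠ 0 := by
        rw [hup, Matrix.transpose_add, Matrix.add_mul, hold, zero_add,
          Matrix.transpose_mul, Matrix.mul_assoc, ← hM2, hofE, transpose_outer,
          outer_mul]
        apply outer_ne_zero hbb0
        have hMc : Mᵀ.mulVec (δ • c0) = δ • fun j => M p0 j := by
          rw [Matrix.mulVec_smul, hc0]
          congr 1
          rw [Matrix.mulVec_single_one]
          rfl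
        rw [hMc]
        exact smul_ne_zero (ne_of_gt hδpos) hwne
      refine ⟨W'', ?_, ?_, hprod'', Or.inl hinv⟩
      · have hd1 : dist W'' W' ≤ |δ| * ‖E0f‖ := dist_update_pert W' lk E0f δ
        have hd2 : |δ| * ‖E0f‖ < ε / 2 := by
          rw [abs_of_pos hδpos, hδ]
          have hE0nn : (0:ℝ) ≤ ‖E0f‖ := norm_nonneg _
          rw [div_mul_eq_mul_div, div_lt_iff₀ (by linarith)]
          nlinarith
        calc dist W'' What ≤ dist W'' W' + dist W' What := dist_triangle _ _ _
          _ < ε / 2 + ε / 2 := add_lt_add (lt_of_le_of_lt hd1 hd2) hdist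
          _ = ε := by ring
      · intro j hj
        have hjne : j ≠ lk := by
          intro hee
          rw [hee] at hj
          have hval : (lk : ℕ) = k := rfl
          omega
        rw [hW'', Function.update_of_ne hjne, hagg j (by omega)]

/-- Combined construction: near any rank-deficient-style point with nonzero residual
correlation, there are same-product points with a nonzero layer gradient. -/
lemma master (hL : 1 ≤ L)
    (What : (l : Fin L) → Fin (d ((l : ℕ) + 1)) → Fin (d (l : ℕ)) → ℝ)
    (G : Matrix (Fin (d L)) (Fin (d 0)) ℝ) (hG : G ≠ 0)
    (hthin : ∀ i ≤ L, min (d 0) (d L) ≤ d i) :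
    ∀ ε > 0, ∃ W', ∃ l : Fin L,
      dist W' What < ε ∧ dlp d (extW L d W') L = dlp d (extW L d What) L ∧
      (uldp d (extW L d W') ((l : ℕ) + 1) L)ᵀ * (G * (dlp d (extW L d W') (l : ℕ))ᵀ) ≠ 0 := by
  intro ε hε
  rcases le_total (d L) (d 0) with hc | hc
  · obtain ⟨L', rfl⟩ : ∃ L', L = L' + 1 := ⟨L - 1, by omega⟩
    have hthin' : ∀ i ≤ L' + 1, d (L' + 1) ≤ d i := by
      intro i hi
      have := hthin i hi
      omega
    obtain ⟨W', hdist, hagg, hprod, hdisj⟩ :=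
      primal hL What G hG hthin' L' (by omega) ε hε
    rcases hdisj with hD | ⟨l, hgrad⟩
    · refine ⟨W', ⟨L', by omega⟩, hdist, hprod, ?_⟩
      show (uldp d (extW (L' + 1) d W') (L' + 1) (L' + 1))ᵀ
        * (G * (dlp d (extW (L' + 1) d W') L')ᵀ) ≠ 0
      rw [uldp_self, Matrix.transpose_one, Matrix.one_mul]
      exact hD
    · exact ⟨W', l, hdist, hprod, hgrad⟩
  · have hthin' : ∀ i ≤ L, d 0 ≤ d i := by
      intro i hi
      have := hthin i hi
      omega
    obtain ⟨W', hdist, hagg, hprod, hdisj⟩ :=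
      dual hL What G hG hthin' (L - 1) 1 (by omega) (le_refl 1) ε hε
    rcases hdisj with hU | ⟨l, hgrad⟩
    · refine ⟨W', ⟨0, by omega⟩, hdist, hprod, ?_⟩
      show (uldp d (extW L d W') (0 + 1) L)ᵀ * (G * (dlp d (extW L d W') 0)ᵀ) ≠ 0
      rw [dlp_zero, Matrix.transpose_one, Matrix.mul_one]
      exact hU
    · exact ⟨W', l, hdist, hprod, hgrad⟩

/-- From the master construction: the point is neither a local min nor a local max. -/
lemma finisher (hL : 1 ≤ L)
    (X : Matrix (Fin (d 0)) (Fin n) ℝ) (Y : Matrix (Fin (d L)) (Fin n) ℝ)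
    (F : ((l : Fin L) → Fin (d ((l : ℕ) + 1)) → Fin (d (l : ℕ)) → ℝ) → ℝ)
    (hF : F = fun W => frobSq (Y - dlp d (extW L d W) L * X))
    (What : (l : Fin L) → Fin (d ((l : ℕ) + 1)) → Fin (d (l : ℕ)) → ℝ)
    (hmaster : ∀ ε > 0, ∃ W', ∃ l : Fin L,
      dist W' What < ε ∧ dlp d (extW L d W') L = dlp d (extW L d What) L ∧
      (uldp d (extW L d W') ((l : ℕ) + 1) L)ᵀ
        * (((Y - dlp d (extW L d What) L * X) * Xᵀ) * (dlp d (extW L d W') (l : ℕ))ᵀ) ≠ 0) :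
    ¬ IsLocalMin F What ∧ ¬ IsLocalMax F What := by
  have key : ∀ ε > 0, (∃ x, dist x What < ε ∧ F x < F What)
      ∧ (∃ x, dist x What < ε ∧ F What < F x) := by
    intro ε hε
    obtain ⟨W', l, hdist, hprod, hMl⟩ := hmaster (ε / 2) (by positivity)
    set Ml := (uldp d (extW L d W') ((l : ℕ) + 1) L)ᵀ
      * (((Y - dlp d (extW L d What) L * X) * Xᵀ) * (dlp d (extW L d W') (l : ℕ))ᵀ)
      with hMldef
    set α := dotM Ml Ml with hαdef
    have hαpos : 0 < α := dotM_self_pos _ hMl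
    set β := frobSq ((uldp d (extW L d W') ((l : ℕ) + 1) L
      * (Matrix.of (fun p q => Ml p q) * dlp d (extW L d W') (l : ℕ))) * X) with hβdef
    have hβnn : 0 ≤ β := by rw [hβdef, frobSq_eq_dotM]; exact dotM_self_nonneg _
    have hquad : ∀ t : ℝ,
        F (Function.update W' l (fun p q => W' l p q + t * Ml p q))
          = F What - 2 * t * α + t ^ 2 * β := by
      intro t
      rw [hF]
      show frobSq (Y - dlp d (extW L d
          (Function.update W' l (fun p q => W' l p q + t * Ml p q))) L * X)
        = frobSq (Y - dlp d (extW L d What) L * X) - 2 * t * α + t ^ 2 * β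
      rw [F_update X Y W' l (fun p q => Ml p q) t, hprod, dotM_rearrange, ← hMldef, ← hβdef]
      have h8 : dotM Ml (Matrix.of fun p q => Ml p q) = α := rfl
      rw [h8]
    set ν := ‖(fun p q => Ml p q : Fin (d ((l : ℕ) + 1)) → Fin (d (l : ℕ)) → ℝ)‖ with hν
    have hνnn : 0 ≤ ν := norm_nonneg _
    set t₀ := min (ε / (2 * (ν + 1))) (α / (β + 1)) with ht₀
    have ht₀pos : 0 < t₀ := lt_min (by positivity) (by positivity)
    have hdd : ∀ t : ℝ, |t| ≤ t₀ →
        dist (Function.update W' l (fun p q => W' l p q + t * Ml p q)) What < ε := by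
      intro t ht
      have h1 : dist (Function.update W' l (fun p q => W' l p q + t * Ml p q)) W'
          ≤ |t| * ν := dist_update_pert W' l (fun p q => Ml p q) t
      have h2 : |t| * ν ≤ t₀ * ν := by
        apply mul_le_mul_of_nonneg_right ht hνnn
      have h3 : t₀ ≤ ε / (2 * (ν + 1)) := min_le_left _ _
      have h3' : t₀ * (2 * (ν + 1)) ≤ ε := (le_div_iff₀ (by linarith)).mp h3
      have h4 : t₀ * ν < ε / 2 := by nlinarith [ht₀pos]
      calc dist (Function.update W' l (fun p q => W' l p q + t * Ml p q)) What
          ≤ dist (Function.update W' l (fun p q => W' l p q + t * Ml p q)) W'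
            + dist W' What := dist_triangle _ _ _
        _ < ε / 2 + ε / 2 := by
            apply add_lt_add_of_le_of_lt (le_trans h1 (le_trans h2 h4.le)) ?_
            · exact hdist
        _ = ε := by ring
    have h6 : t₀ ≤ α / (β + 1) := min_le_right _ _
    have h7 : t₀ * (β + 1) ≤ α := (le_div_iff₀ (by linarith)).mp h6
    have hquadlt : F (Function.update W' l (fun p q => W' l p q + t₀ * Ml p q)) < F What := by
      rw [hquad t₀]
      nlinarith [mul_le_mul_of_nonneg_left h7 ht₀pos.le, sq_nonneg t₀]
    have hquadgt : F What
        < F (Function.update W' l (fun p q => W' l p q + (-t₀) * Ml p q)) := by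
      rw [hquad (-t₀)]
      nlinarith [sq_nonneg t₀]
    exact ⟨⟨_, hdd t₀ (abs_of_pos ht₀pos).le, hquadlt⟩,
      ⟨_, hdd (-t₀) (by rw [abs_neg]; exact (abs_of_pos ht₀pos).le), hquadgt⟩⟩
  constructor
  · intro hmin
    obtain ⟨ε, hε, hball⟩ := Metric.eventually_nhds_iff.mp hmin
    obtain ⟨⟨x, hx1, hx2⟩, -⟩ := key ε hε
    exact absurd (hball hx1) (not_le.mpr hx2)
  · intro hmax
    obtain ⟨ε, hε, hball⟩ := Metric.eventually_nhds_iff.mp hmax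
    obtain ⟨-, ⟨x, hx1, hx2⟩⟩ := key ε hε
    exact absurd (hball hx1) (not_le.mpr hx2)

end Part2

end DLN

/-- Characterization of critical points of the deep linear network loss
`F(W_1, …, W_L) = ‖Y − W_L ⋯ W_1 X‖_F²` (here `d 0 = d_x`, `d L = d_y`).
Assume `d_x ≤ n`, `d_y ≤ n`, `X Xᵀ` and `X Yᵀ` have full rank, the matrix
`Y Xᵀ (X Xᵀ)⁻¹ X` has pairwise distinct singular values (equivalently, `A Aᵀ` has pairwise
distinct eigenvalues), and the thinnest layer is the input or output layer.
Then every critical point at which the product `W_L ⋯ W_1` has full rank is a global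
minimum, and every critical point at which the product is rank-deficient is a saddle
point (a critical point that is neither a local minimum nor a local maximum). -/
theorem stmt2 (L n : ℕ) (hL : 1 ≤ L) (d : ℕ → ℕ)
    (hdx : d 0 ≤ n) (hdy : d L ≤ n)
    (X : Matrix (Fin (d 0)) (Fin n) ℝ) (Y : Matrix (Fin (d L)) (Fin n) ℝ)
    (hXX : (X * X.transpose).rank = d 0)
    (hXY : (X * Y.transpose).rank = min (d 0) (d L))
    (A : Matrix (Fin (d L)) (Fin n) ℝ)
    (hA : A = Y * X.transpose * (X * X.transpose)⁻¹ * X)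
    (hH : (A * A.transpose).IsHermitian)
    (hdistinct : Function.Injective hH.eigenvalues)
    (hthin : ∀ i ≤ L, min (d 0) (d L) ≤ d i)
    (F : ((l : Fin L) → Fin (d ((l : ℕ) + 1)) → Fin (d (l : ℕ)) → ℝ) → ℝ)
    (hF : F = fun W => frobSq (Y - dlp d (extW L d W) L * X))
    (What : (l : Fin L) → Fin (d ((l : ℕ) + 1)) → Fin (d (l : ℕ)) → ℝ)
    (hcrit : fderiv ℝ F What = 0) :
    ((dlp d (extW L d What) L).rank = min (d 0) (d L) → ∀ W, F What ≤ F W) ∧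
      ((dlp d (extW L d What) L).rank < min (d 0) (d L) →
        ¬ IsLocalMin F What ∧ ¬ IsLocalMax F What) := by
  constructor
  · intro hrank W
    exact DLN.part1 hL X Y F hF What hcrit hrank W
  · intro hrank
    have hG : (Y - dlp d (extW L d What) L * X) * X.transpose ≠ 0 := by
      intro h0
      have h2 : (Y - dlp d (extW L d What) L * X) * X.transpose
          = Y * X.transpose - dlp d (extW L d What) L * (X * X.transpose) := by
        rw [Matrix.sub_mul, Matrix.mul_assoc]
      rw [h2] at h0
      have h1 : Y * X.transpose = dlp d (extW L d What) L * (X * X.transpose) :=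
        sub_eq_zero.mp h0
      have h3 : (Y * X.transpose).rank ≤ (dlp d (extW L d What) L).rank := by
        rw [h1]; exact Matrix.rank_mul_le_left _ _
      have h4 : (Y * X.transpose).rank = min (d 0) (d L) := by
        have h5 : (X * Y.transpose).transpose = Y * X.transpose := by
          rw [Matrix.transpose_mul, Matrix.transpose_transpose]
        rw [← h5, Matrix.rank_transpose, hXY]
      omega
    apply DLN.finisher hL X Y F hF What
    intro ε hε
    exact DLN.master hL What _ hG hthin ε hε
end
end

section
/- Let n ≥ 3 and let x₁, …, xₙ ∈ ℝ be pairwise distinct. Then for every hidden width p ≥ n there exist outputs y₁, …, yₙ ∈ ℝ such that the empirical quadratic loss F(v, w, b) = Σ_{i=1}^n (y_i − Σ_{j=1}^p v_j σ(w_j x_i + b_j))² of the one-hidden-layer network with sigmoid activation σ(z) = 1/(1 + e^{−z}) has a sub-optimal local minimum. -/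
noncomputable section

/-- The sigmoid activation function. -/
def sigmoid (z : ℝ) : ℝ := 1 / (1 + Real.exp (-z))

namespace Stmt4Aux

def sd (z : ℝ) : ℝ := Real.exp (-z) / (1 + Real.exp (-z))^2
def sdd (z : ℝ) : ℝ := Real.exp (-z) * (Real.exp (-z) - 1) / (1 + Real.exp (-z))^3

lemma sigmoid_pos (z : ℝ) : 0 < sigmoid z := by unfold sigmoid; positivity

lemma one_add_exp_ne (z : ℝ) : 1 + Real.exp (-z) ≠ 0 := by positivity

lemma hasDerivAt_sigmoid (z : ℝ) : HasDerivAt sigmoid (sd z) z := by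
  have h1 : HasDerivAt (fun z : ℝ => 1 + Real.exp (-z)) (-Real.exp (-z)) z := by
    simpa using ((Real.hasDerivAt_exp (-z)).comp z ((hasDerivAt_id z).neg)).const_add 1
  have h2 := h1.fun_inv (one_add_exp_ne z)
  simp only [neg_neg] at h2
  unfold sigmoid sd
  simpa [one_div] using h2

lemma hasDerivAt_sd (z : ℝ) : HasDerivAt sd (sdd z) z := by
  have he : HasDerivAt (fun z : ℝ => Real.exp (-z)) (-Real.exp (-z)) z := by
    simpa [Function.comp_def] using (Real.hasDerivAt_exp (-z)).comp z ((hasDerivAt_id z).neg)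
  have h1 : HasDerivAt (fun z : ℝ => (1 + Real.exp (-z))^2)
      (2 * (1 + Real.exp (-z)) * (-Real.exp (-z))) z := by
    simpa using ((he.const_add 1).fun_pow 2)
  have := he.fun_div h1 (by positivity)
  simp only [sd, sdd]
  refine this.congr_deriv ?_
  field_simp
  ring

lemma continuous_sdd : Continuous sdd := by
  unfold sdd
  fun_prop (disch := intros; positivity)

lemma sdd_neg {z : ℝ} (hz : 0 < z) : sdd z < 0 := by
  have h1 : Real.exp (-z) < 1 := by
    rw [Real.exp_lt_one_iff]; linarith
  have := Real.exp_pos (-z)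
  unfold sdd
  apply div_neg_of_neg_of_pos
  · nlinarith
  · positivity

lemma sdd_pos {z : ℝ} (hz : z < 0) : 0 < sdd z := by
  have h1 : 1 < Real.exp (-z) := by
    rw [Real.one_lt_exp_iff]; linarith
  have := Real.exp_pos (-z)
  unfold sdd
  apply div_pos
  · nlinarith
  · positivity

variable {n : ℕ} (r x : Fin n → ℝ)

def phi (b w : ℝ) : ℝ := ∑ i, r i * sigmoid (w * x i + b)
def phi1 (b w : ℝ) : ℝ := ∑ i, r i * (x i * sd (w * x i + b))
def phi2 (b w : ℝ) : ℝ := ∑ i, r i * (x i ^ 2 * sdd (w * x i + b))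

lemma hasDerivAt_aff (w c b : ℝ) : HasDerivAt (fun w : ℝ => w * c + b) c w := by
  simpa using ((hasDerivAt_id w).mul_const c).add_const b

lemma hasDerivAt_phi (b w : ℝ) : HasDerivAt (phi r x b) (phi1 r x b w) w := by
  apply HasDerivAt.fun_sum
  intro i _
  have := ((hasDerivAt_sigmoid (w * x i + b)).comp w (hasDerivAt_aff w (x i) b)).const_mul (r i)
  simpa [mul_comm, mul_assoc, mul_left_comm] using this

lemma hasDerivAt_phi1 (b w : ℝ) : HasDerivAt (phi1 r x b) (phi2 r x b w) w := by
  apply HasDerivAt.fun_sum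
  intro i _
  have := (((hasDerivAt_sd (w * x i + b)).comp w (hasDerivAt_aff w (x i) b)).const_mul (x i)).const_mul (r i)
  refine this.congr_deriv ?_
  ring

lemma phi_zero (hr1 : ∑ i, r i = 0) (b : ℝ) : phi r x b 0 = 0 := by
  unfold phi
  simp only [zero_mul, zero_add]
  rw [← Finset.sum_mul] at *
  rw [hr1, zero_mul]

lemma phi1_zero (hrx : ∑ i, r i * x i = 0) (b : ℝ) : phi1 r x b 0 = 0 := by
  unfold phi1
  simp only [zero_mul, zero_add]
  have : ∑ i, r i * (x i * sd b) = (∑ i, r i * x i) * sd b := by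
    rw [Finset.sum_mul]; congr 1; ext i; ring
  rw [this, hrx, zero_mul]

lemma phi2_zero (b : ℝ) : phi2 r x b 0 = (∑ i, r i * x i ^ 2) * sdd b := by
  unfold phi2
  simp only [zero_mul, zero_add]
  rw [Finset.sum_mul]; congr 1; ext i; ring

lemma key_le (hr1 : ∑ i, r i = 0) (hrx : ∑ i, r i * x i = 0) {δ b : ℝ}
    (h2 : ∀ w ∈ Set.Ioo (-δ) δ, phi2 r x b w ≤ 0) :
    ∀ w ∈ Set.Ioo (-δ) δ, phi r x b w ≤ 0 := by
  intro w hw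
  obtain ⟨hw1, hw2⟩ := hw
  have hδ : 0 < δ := by linarith
  have hmem0 : (0:ℝ) ∈ Set.Ioo (-δ) δ := ⟨by linarith, hδ⟩
  have hdphi : ∀ u, deriv (phi r x b) u = phi1 r x b u := fun u => (hasDerivAt_phi r x b u).deriv
  have hdphi1 : ∀ u, deriv (phi1 r x b) u = phi2 r x b u := fun u => (hasDerivAt_phi1 r x b u).deriv
  have hc : Continuous (phi r x b) :=
    (Differentiable.continuous fun u => (hasDerivAt_phi r x b u).differentiableAt)
  have hc1 : Continuous (phi1 r x b) :=
    (Differentiable.continuous fun u => (hasDerivAt_phi1 r x b u).differentiableAt)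
  have hanti : AntitoneOn (phi1 r x b) (Set.Ioo (-δ) δ) := by
    apply antitoneOn_of_deriv_nonpos (convex_Ioo _ _) hc1.continuousOn
    · intro u _
      exact (hasDerivAt_phi1 r x b u).differentiableAt.differentiableWithinAt
    · intro u hu
      rw [hdphi1]
      exact h2 u (by simpa [interior_Ioo] using hu)
  rcases le_or_gt 0 w with h0w | hw0
  · have hmono : AntitoneOn (phi r x b) (Set.Icc 0 w) := by
      apply antitoneOn_of_deriv_nonpos (convex_Icc _ _) hc.continuousOn
      · intro u _
        exact (hasDerivAt_phi r x b u).differentiableAt.differentiableWithinAt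
      · intro u hu
        rw [interior_Icc] at hu
        obtain ⟨hu1, hu2⟩ := hu
        have huD : u ∈ Set.Ioo (-δ) δ := ⟨by linarith, by linarith⟩
        rw [hdphi]
        calc phi1 r x b u ≤ phi1 r x b 0 := hanti hmem0 huD hu1.le
          _ = 0 := phi1_zero r x hrx b
    calc phi r x b w ≤ phi r x b 0 := hmono (Set.left_mem_Icc.2 h0w) (Set.right_mem_Icc.2 h0w) h0w
      _ = 0 := phi_zero r x hr1 b
  · have hmono : MonotoneOn (phi r x b) (Set.Icc w 0) := by
      apply monotoneOn_of_deriv_nonneg (convex_Icc _ _) hc.continuousOn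
      · intro u _
        exact (hasDerivAt_phi r x b u).differentiableAt.differentiableWithinAt
      · intro u hu
        rw [interior_Icc] at hu
        obtain ⟨hu1, hu2⟩ := hu
        have huD : u ∈ Set.Ioo (-δ) δ := ⟨by linarith, by linarith⟩
        rw [hdphi]
        have : phi1 r x b 0 ≤ phi1 r x b u := hanti huD hmem0 hu2.le
        rw [phi1_zero r x hrx b] at this
        exact this
    have := hmono (Set.left_mem_Icc.2 hw0.le) (Set.right_mem_Icc.2 hw0.le) hw0.le
    rw [phi_zero r x hr1 b] at this
    exact this

lemma key_ge (hr1 : ∑ i, r i = 0) (hrx : ∑ i, r i * x i = 0) {δ b : ℝ}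
    (h2 : ∀ w ∈ Set.Ioo (-δ) δ, 0 ≤ phi2 r x b w) :
    ∀ w ∈ Set.Ioo (-δ) δ, 0 ≤ phi r x b w := by
  have hr1' : ∑ i, (fun i => -r i) i = 0 := by simp [hr1]
  have hrx' : ∑ i, (fun i => -r i) i * x i = 0 := by
    simp only [neg_mul]
    rw [Finset.sum_neg_distrib, hrx, neg_zero]
  have h2' : ∀ w ∈ Set.Ioo (-δ) δ, phi2 (fun i => -r i) x b w ≤ 0 := by
    intro w hw
    have : phi2 (fun i => -r i) x b w = -phi2 r x b w := by
      unfold phi2; simp [Finset.sum_neg_distrib]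
    rw [this]
    linarith [h2 w hw]
  intro w hw
  have := key_le (fun i => -r i) x hr1' hrx' h2' w hw
  have heq : phi (fun i => -r i) x b w = -phi r x b w := by
    unfold phi; simp [Finset.sum_neg_distrib]
  rw [heq] at this
  linarith

lemma key_pos (hr1 : ∑ i, r i = 0) (hrx : ∑ i, r i * x i = 0) {δ b : ℝ} (hδ : 0 < δ)
    (h2 : ∀ w ∈ Set.Ioo (-δ) δ, 0 < phi2 r x b w) :
    ∀ w ∈ Set.Ioo 0 δ, 0 < phi r x b w := by
  intro w hw
  obtain ⟨hw1, hw2⟩ := hw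
  have hmem0 : (0:ℝ) ∈ Set.Ioo (-δ) δ := ⟨by linarith, hδ⟩
  have hdphi : ∀ u, deriv (phi r x b) u = phi1 r x b u := fun u => (hasDerivAt_phi r x b u).deriv
  have hdphi1 : ∀ u, deriv (phi1 r x b) u = phi2 r x b u := fun u => (hasDerivAt_phi1 r x b u).deriv
  have hc : Continuous (phi r x b) :=
    (Differentiable.continuous fun u => (hasDerivAt_phi r x b u).differentiableAt)
  have hc1 : Continuous (phi1 r x b) :=
    (Differentiable.continuous fun u => (hasDerivAt_phi1 r x b u).differentiableAt)
  have hmono1 : StrictMonoOn (phi1 r x b) (Set.Ioo (-δ) δ) := by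
    apply strictMonoOn_of_deriv_pos (convex_Ioo _ _) hc1.continuousOn
    intro u hu
    rw [hdphi1]
    exact h2 u (by simpa [interior_Ioo] using hu)
  have hmono : StrictMonoOn (phi r x b) (Set.Icc 0 w) := by
    apply strictMonoOn_of_deriv_pos (convex_Icc _ _) hc.continuousOn
    intro u hu
    rw [interior_Icc] at hu
    obtain ⟨hu1, hu2⟩ := hu
    have huD : u ∈ Set.Ioo (-δ) δ := ⟨by linarith, by linarith⟩
    rw [hdphi]
    have := hmono1 hmem0 huD hu1
    rw [phi1_zero r x hrx b] at this
    exact this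
  have := hmono (Set.left_mem_Icc.2 hw1.le) (Set.right_mem_Icc.2 hw1.le) hw1
  rw [phi_zero r x hr1 b] at this
  exact this

lemma phi2_box (b0 : ℝ) (h : phi2 r x b0 0 < 0) :
    ∃ ε > 0, ∀ w b : ℝ, |w| < ε → |b - b0| < ε → phi2 r x b w < 0 := by
  have hcont : Continuous (fun q : ℝ × ℝ => phi2 r x q.2 q.1) := by
    unfold phi2
    apply continuous_finset_sum
    intro i _
    exact continuous_const.mul (continuous_const.mul (continuous_sdd.comp
      ((continuous_fst.mul continuous_const).add continuous_snd)))
  have hta := hcont.continuousAt (x := ((0:ℝ), b0))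
  have hev : ∀ᶠ q : ℝ × ℝ in nhds (0, b0), phi2 r x q.2 q.1 < 0 :=
    hta.eventually (eventually_lt_nhds h)
  rw [Metric.eventually_nhds_iff] at hev
  obtain ⟨ε, hε, hb⟩ := hev
  refine ⟨ε, hε, fun w b hw hbb => hb (y := (w, b)) ?_⟩
  rw [Prod.dist_eq]
  apply max_lt <;> rw [Real.dist_eq] <;> simpa

lemma phi2_box_pos (b0 : ℝ) (h : 0 < phi2 r x b0 0) :
    ∃ ε > 0, ∀ w b : ℝ, |w| < ε → |b - b0| < ε → 0 < phi2 r x b w := by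
  have hneg : phi2 (fun i => -r i) x b0 0 < 0 := by
    have : phi2 (fun i => -r i) x b0 0 = -phi2 r x b0 0 := by
      unfold phi2; simp [Finset.sum_neg_distrib]
    rw [this]; linarith
  obtain ⟨ε, hε, hb⟩ := phi2_box (fun i => -r i) x b0 hneg
  refine ⟨ε, hε, fun w b hw hbb => ?_⟩
  have := hb w b hw hbb
  have heq : phi2 (fun i => -r i) x b w = -phi2 r x b w := by
    unfold phi2; simp [Finset.sum_neg_distrib]
  rw [heq] at this
  linarith

def rvec (i0 i1 i2 : Fin n) (c0 c1 c2 : ℝ) : Fin n → ℝ := fun i =>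
  (if i = i0 then c0 else 0) + (if i = i1 then c1 else 0) + (if i = i2 then c2 else 0)

lemma rvec_sum (i0 i1 i2 : Fin n) (c0 c1 c2 : ℝ) (g : Fin n → ℝ) :
    ∑ i, rvec i0 i1 i2 c0 c1 c2 i * g i = c0 * g i0 + c1 * g i1 + c2 * g i2 := by
  unfold rvec
  simp only [add_mul, ite_mul, zero_mul]
  rw [Finset.sum_add_distrib, Finset.sum_add_distrib]
  simp [Finset.sum_ite_eq']

lemma moments (A B C : ℝ) (hAB : A ≠ B) (hAC : A ≠ C) (hBC : B ≠ C) :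
    (1/((A-B)*(A-C)) + 1/((B-A)*(B-C)) + 1/((C-A)*(C-B)) = 0) ∧
    (1/((A-B)*(A-C)) * A + 1/((B-A)*(B-C)) * B + 1/((C-A)*(C-B)) * C = 0) ∧
    (1/((A-B)*(A-C)) * A^2 + 1/((B-A)*(B-C)) * B^2 + 1/((C-A)*(C-B)) * C^2 = 1) := by
  have h1 : A - B ≠ 0 := sub_ne_zero.2 hAB
  have h2 : A - C ≠ 0 := sub_ne_zero.2 hAC
  have h3 : B - A ≠ 0 := sub_ne_zero.2 hAB.symm
  have h4 : B - C ≠ 0 := sub_ne_zero.2 hBC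
  have h5 : C - A ≠ 0 := sub_ne_zero.2 hAC.symm
  have h6 : C - B ≠ 0 := sub_ne_zero.2 hBC.symm
  refine ⟨?_, ?_, ?_⟩ <;> (field_simp; ring)

lemma sum_ite_fin (p : ℕ) (j0 : Fin p) (A B : ℝ) :
    ∑ j, (if j = j0 then A else B) = A + ((p:ℝ) - 1) * B := by
  have h : ∀ j : Fin p, (if j = j0 then A else B) = B + (if j = j0 then A - B else 0) := by
    intro j; split <;> ring
  simp only [h, Finset.sum_add_distrib, Finset.sum_const, Finset.sum_ite_eq',
    Finset.mem_univ, if_true, Finset.card_univ, Fintype.card_fin, nsmul_eq_mul]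
  ring

end Stmt4Aux

set_option maxHeartbeats 1000000 in
open Stmt4Aux in
/-- For `n ≥ 3` pairwise distinct inputs `x₁, …, xₙ ∈ ℝ` and any width `p ≥ n`, there
exist outputs `y₁, …, yₙ` such that the quadratic loss of the one-hidden-layer sigmoid
network `x ↦ ∑_j v_j σ(w_j x + b_j)` has a sub-optimal local minimum
(a local minimum with value strictly greater than the infimum of the loss). -/
theorem stmt4 (n : ℕ) (hn : 3 ≤ n) (x : Fin n → ℝ) (hx : Function.Injective x)
    (p : ℕ) (hp : n ≤ p) :
    ∃ y : Fin n → ℝ,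
      ∃ θ : (Fin p → ℝ) × (Fin p → ℝ) × (Fin p → ℝ),
        IsLocalMin
          (fun θ' : (Fin p → ℝ) × (Fin p → ℝ) × (Fin p → ℝ) =>
            ∑ i, (y i - ∑ j, θ'.1 j * sigmoid (θ'.2.1 j * x i + θ'.2.2 j)) ^ 2) θ ∧
        (⨅ θ' : (Fin p → ℝ) × (Fin p → ℝ) × (Fin p → ℝ),
            ∑ i, (y i - ∑ j, θ'.1 j * sigmoid (θ'.2.1 j * x i + θ'.2.2 j)) ^ 2) <
          ∑ i, (y i - ∑ j, θ.1 j * sigmoid (θ.2.1 j * x i + θ.2.2 j)) ^ 2 := by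
  classical
  -- indices and residual vector
  have h0 : 0 < n := by omega
  set i0 : Fin n := ⟨0, by omega⟩ with hi0
  set i1 : Fin n := ⟨1, by omega⟩ with hi1
  set i2 : Fin n := ⟨2, by omega⟩ with hi2
  have hAB : x i0 ≠ x i1 := fun h => by have := hx h; simp [hi0, hi1, Fin.ext_iff] at this
  have hAC : x i0 ≠ x i2 := fun h => by have := hx h; simp [hi0, hi2, Fin.ext_iff] at this
  have hBC : x i1 ≠ x i2 := fun h => by have := hx h; simp [hi1, hi2, Fin.ext_iff] at this
  obtain ⟨m0, m1, m2⟩ := moments (x i0) (x i1) (x i2) hAB hAC hBC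
  set c0 : ℝ := 1/((x i0 - x i1)*(x i0 - x i2)) with hc0
  set c1 : ℝ := 1/((x i1 - x i0)*(x i1 - x i2)) with hc1
  set c2 : ℝ := 1/((x i2 - x i0)*(x i2 - x i1)) with hc2
  set r : Fin n → ℝ := rvec i0 i1 i2 c0 c1 c2 with hr
  have hr1 : ∑ i, r i = 0 := by
    have h := rvec_sum i0 i1 i2 c0 c1 c2 (fun _ => 1)
    simp only [mul_one] at h
    rw [hr]; rw [h]; exact m0
  have hrx : ∑ i, r i * x i = 0 := by
    rw [hr, rvec_sum]; exact m1
  have hrx2 : ∑ i, r i * x i ^ 2 = 1 := by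
    rw [hr, rvec_sum]; exact m2
  -- the sign boxes for phi2
  obtain ⟨ε1, hε1, hbox1⟩ : ∃ ε > 0, ∀ w b : ℝ, |w| < ε → |b - 1| < ε → phi2 r x b w < 0 := by
    apply phi2_box
    rw [phi2_zero, hrx2, one_mul]
    exact sdd_neg one_pos
  obtain ⟨ε0, hε0, hbox0⟩ : ∃ ε > 0, ∀ w b : ℝ, |w| < ε → |b - (-1)| < ε → 0 < phi2 r x b w := by
    apply phi2_box_pos
    rw [phi2_zero, hrx2, one_mul]
    exact sdd_pos (by norm_num)
  -- the parameter point
  set j0 : Fin p := ⟨0, by omega⟩ with hj0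
  obtain ⟨P1, hP1⟩ : ∃ P1 : ℝ, P1 = (p : ℝ) - 1 := ⟨_, rfl⟩
  have hP1pos : 0 < P1 := by
    have : (3:ℝ) ≤ (p:ℝ) := by exact_mod_cast (by omega : 3 ≤ p)
    rw [hP1]; linarith
  obtain ⟨va, hva⟩ : ∃ va : ℝ, va = sigmoid (-1) := ⟨_, rfl⟩
  obtain ⟨v0, hv0⟩ : ∃ v0 : ℝ, v0 = -(P1 * sigmoid 1) := ⟨_, rfl⟩
  have hvapos : 0 < va := by rw [hva]; exact sigmoid_pos _
  have hv0neg : v0 < 0 := by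
    rw [hv0]; have := sigmoid_pos 1; nlinarith
  obtain ⟨vf, hvf⟩ : ∃ vf : Fin p → ℝ, vf = fun j => if j = j0 then v0 else va := ⟨_, rfl⟩
  obtain ⟨wf, hwf⟩ : ∃ wf : Fin p → ℝ, wf = fun _ => 0 := ⟨_, rfl⟩
  obtain ⟨bf, hbf⟩ : ∃ bf : Fin p → ℝ, bf = fun j => if j = j0 then (-1:ℝ) else 1 := ⟨_, rfl⟩
  -- inner sum vanishes at the candidate point
  have hinner : ∀ i, ∑ j, vf j * sigmoid (wf j * x i + bf j) = 0 := by
    intro i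
    have hcongr : ∀ j : Fin p, vf j * sigmoid (wf j * x i + bf j)
        = if j = j0 then v0 * sigmoid (-1) else va * sigmoid 1 := by
      intro j
      rw [hvf, hwf, hbf]
      by_cases hj : j = j0 <;> simp [hj]
    rw [Finset.sum_congr rfl (fun j _ => hcongr j), sum_ite_fin, hv0, hva, ← hP1]
    ring
  have hfθ : ∑ i, (r i - ∑ j, vf j * sigmoid (wf j * x i + bf j)) ^ 2 = ∑ i, r i ^ 2 := by
    apply Finset.sum_congr rfl
    intro i _
    rw [hinner i, sub_zero]
  refine ⟨r, (vf, wf, bf), ?_, ?_⟩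
  · -- local minimum
    have hev : ∀ᶠ θ' in nhds (vf, wf, bf), ∀ j : Fin p,
        (j = j0 → θ'.1 j < 0 ∧ |θ'.2.1 j| < ε0 ∧ |θ'.2.2 j - (-1)| < ε0) ∧
        (j ≠ j0 → 0 < θ'.1 j ∧ |θ'.2.1 j| < ε1 ∧ |θ'.2.2 j - 1| < ε1) := by
      rw [Filter.eventually_all]
      intro j
      have hcv : Continuous (fun θ' : (Fin p → ℝ) × (Fin p → ℝ) × (Fin p → ℝ) => θ'.1 j) :=
        (continuous_apply j).comp continuous_fst
      have hcw : Continuous (fun θ' : (Fin p → ℝ) × (Fin p → ℝ) × (Fin p → ℝ) => θ'.2.1 j) :=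
        (continuous_apply j).comp (continuous_fst.comp continuous_snd)
      have hcb : Continuous (fun θ' : (Fin p → ℝ) × (Fin p → ℝ) × (Fin p → ℝ) => θ'.2.2 j) :=
        (continuous_apply j).comp (continuous_snd.comp continuous_snd)
      by_cases hj : j = j0
      · subst hj
        have hval : vf j0 < 0 := by rw [hvf]; simpa using hv0neg
        have e1 : ∀ᶠ θ' in nhds (vf, wf, bf), θ'.1 j0 < 0 :=
          hcv.continuousAt.eventually (eventually_lt_nhds hval)
        have e2 : ∀ᶠ θ' in nhds (vf, wf, bf), |θ'.2.1 j0| < ε0 := by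
          have h0 : ∀ᶠ t in nhds (wf j0), |t - wf j0| < ε0 := eventually_abs_sub_lt _ hε0
          have h0' : ∀ᶠ t in nhds (wf j0), |t| < ε0 := by
            rw [hwf] at h0 ⊢
            simpa using h0
          exact (hcw.continuousAt (x := (vf, wf, bf))).eventually h0'
        have e3 : ∀ᶠ θ' in nhds (vf, wf, bf), |θ'.2.2 j0 - (-1)| < ε0 := by
          have h0 : ∀ᶠ t in nhds (bf j0), |t - bf j0| < ε0 := eventually_abs_sub_lt _ hε0
          have h0' : ∀ᶠ t in nhds (bf j0), |t - (-1)| < ε0 := by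
            rw [hbf] at h0 ⊢
            simpa using h0
          exact (hcb.continuousAt (x := (vf, wf, bf))).eventually h0'
        filter_upwards [e1, e2, e3] with θ' h1 h2 h3
        exact ⟨fun _ => ⟨h1, h2, h3⟩, fun h => absurd rfl h⟩
      · have hval : 0 < vf j := by rw [hvf]; simpa [hj] using hvapos
        have e1 : ∀ᶠ θ' in nhds (vf, wf, bf), 0 < θ'.1 j :=
          hcv.continuousAt.eventually (eventually_gt_nhds hval)
        have e2 : ∀ᶠ θ' in nhds (vf, wf, bf), |θ'.2.1 j| < ε1 := by
          have h0 : ∀ᶠ t in nhds (wf j), |t - wf j| < ε1 := eventually_abs_sub_lt _ hε1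
          have h0' : ∀ᶠ t in nhds (wf j), |t| < ε1 := by
            rw [hwf] at h0 ⊢
            simpa using h0
          exact (hcw.continuousAt (x := (vf, wf, bf))).eventually h0'
        have e3 : ∀ᶠ θ' in nhds (vf, wf, bf), |θ'.2.2 j - 1| < ε1 := by
          have h0 : ∀ᶠ t in nhds (bf j), |t - bf j| < ε1 := eventually_abs_sub_lt _ hε1
          have h0' : ∀ᶠ t in nhds (bf j), |t - 1| < ε1 := by
            rw [hbf] at h0 ⊢
            simpa [hj] using h0
          exact (hcb.continuousAt (x := (vf, wf, bf))).eventually h0'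
        filter_upwards [e1, e2, e3] with θ' h1 h2 h3
        exact ⟨fun h => absurd h hj, fun _ => ⟨h1, h2, h3⟩⟩
    refine Filter.Eventually.mono hev ?_
    rintro ⟨v', w', b'⟩ hcond
    simp only []
    rw [hfθ]
    have hswap : ∑ i, r i * (∑ j, v' j * sigmoid (w' j * x i + b' j))
        = ∑ j, v' j * phi r x (b' j) (w' j) := by
      unfold phi
      simp only [Finset.mul_sum]
      rw [Finset.sum_comm]
      refine Finset.sum_congr rfl (fun j _ => ?_)
      refine Finset.sum_congr rfl (fun i _ => ?_)
      ring
    have hterms : ∀ j : Fin p, v' j * phi r x (b' j) (w' j) ≤ 0 := by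
      intro j
      by_cases hj : j = j0
      · subst hj
        obtain ⟨hv, hw, hb⟩ := (hcond j0).1 rfl
        have hphi : 0 ≤ phi r x (b' j0) (w' j0) := by
          refine key_ge r x hr1 hrx (δ := ε0) ?_ (w' j0) (abs_lt.1 hw)
          intro w hwI
          exact (hbox0 w (b' j0) (abs_lt.2 ⟨hwI.1, hwI.2⟩) hb).le
        exact mul_nonpos_iff.2 (Or.inr ⟨hv.le, hphi⟩)
      · obtain ⟨hv, hw, hb⟩ := (hcond j).2 hj
        have hphi : phi r x (b' j) (w' j) ≤ 0 := by
          refine key_le r x hr1 hrx (δ := ε1) ?_ (w' j) (abs_lt.1 hw)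
          intro w hwI
          exact (hbox1 w (b' j) (abs_lt.2 ⟨hwI.1, hwI.2⟩) hb).le
        exact mul_nonpos_iff.2 (Or.inl ⟨hv.le, hphi⟩)
    have hsum : ∑ j, v' j * phi r x (b' j) (w' j) ≤ 0 :=
      Finset.sum_nonpos (fun j _ => hterms j)
    have hexp : ∑ i, (r i - ∑ j, v' j * sigmoid (w' j * x i + b' j)) ^ 2
        = ∑ i, r i ^ 2 - 2 * (∑ i, r i * (∑ j, v' j * sigmoid (w' j * x i + b' j)))
          + ∑ i, (∑ j, v' j * sigmoid (w' j * x i + b' j)) ^ 2 := by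
      rw [Finset.sum_congr rfl (fun i (_ : i ∈ Finset.univ) => by ring :
        ∀ i ∈ Finset.univ, (r i - ∑ j, v' j * sigmoid (w' j * x i + b' j)) ^ 2
          = r i ^ 2 - 2 * (r i * (∑ j, v' j * sigmoid (w' j * x i + b' j)))
            + (∑ j, v' j * sigmoid (w' j * x i + b' j)) ^ 2)]
      rw [Finset.sum_add_distrib, Finset.sum_sub_distrib, ← Finset.mul_sum]
    have hG2 : 0 ≤ ∑ i, (∑ j, v' j * sigmoid (w' j * x i + b' j)) ^ 2 :=
      Finset.sum_nonneg (fun i _ => sq_nonneg _)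
    rw [hexp, hswap]
    linarith
  · -- sub-optimality
    have hq : 0 < phi r x (-1) (ε0/2) := by
      refine key_pos r x hr1 hrx hε0 ?_ (ε0/2) ⟨by linarith, by linarith⟩
      intro w hwI
      exact hbox0 w (-1) (abs_lt.2 ⟨hwI.1, hwI.2⟩) (by simpa using hε0)
    obtain ⟨s, hs⟩ : ∃ s : Fin n → ℝ, s = fun i => sigmoid (ε0/2 * x i + -1) := ⟨_, rfl⟩
    have hq' : ∑ i, r i * s i = phi r x (-1) (ε0/2) := by
      rw [hs]; rfl
    obtain ⟨Cs, hCs⟩ : ∃ Cs : ℝ, Cs = ∑ i, s i ^ 2 := ⟨_, rfl⟩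
    have hCspos : 0 < Cs := by
      rw [hCs]
      refine Finset.sum_pos (fun i _ => ?_) ⟨⟨0, by omega⟩, Finset.mem_univ _⟩
      rw [hs]; exact pow_pos (sigmoid_pos _) 2
    obtain ⟨t, ht⟩ : ∃ t : ℝ, t = phi r x (-1) (ε0/2) / Cs := ⟨_, rfl⟩
    have htpos : 0 < t := by rw [ht]; exact div_pos hq hCspos
    have htC : t * Cs = phi r x (-1) (ε0/2) := by
      rw [ht]; field_simp
    obtain ⟨v'', hv''⟩ : ∃ v'' : Fin p → ℝ, v'' = fun j => if j = j0 then t else 0 := ⟨_, rfl⟩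
    have hGt : ∀ i, ∑ j, v'' j * sigmoid (ε0/2 * x i + -1) = t * s i := by
      intro i
      rw [hv'', hs]
      simp only [ite_mul, zero_mul]
      simp [Finset.sum_ite_eq']
    have hbdd : BddBelow (Set.range (fun θ' : (Fin p → ℝ) × (Fin p → ℝ) × (Fin p → ℝ) =>
        ∑ i, (r i - ∑ j, θ'.1 j * sigmoid (θ'.2.1 j * x i + θ'.2.2 j)) ^ 2)) := by
      refine ⟨0, ?_⟩
      rintro val ⟨θ', rfl⟩
      exact Finset.sum_nonneg fun i _ => sq_nonneg _
    have hle := ciInf_le hbdd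
      ((v'', fun _ => ε0/2, fun _ => (-1:ℝ)) : (Fin p → ℝ) × (Fin p → ℝ) × (Fin p → ℝ))
    refine lt_of_le_of_lt hle ?_
    show ∑ i, (r i - ∑ j, v'' j * sigmoid (ε0/2 * x i + -1)) ^ 2
        < ∑ i, (r i - ∑ j, vf j * sigmoid (wf j * x i + bf j)) ^ 2
    rw [hfθ]
    have hLHS : ∑ i, (r i - ∑ j, v'' j * sigmoid (ε0/2 * x i + -1)) ^ 2
        = ∑ i, r i ^ 2 - 2 * t * (∑ i, r i * s i) + t ^ 2 * Cs := by
      rw [Finset.sum_congr rfl (fun i _ => by rw [hGt i])]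
      rw [Finset.sum_congr rfl (fun i (_ : i ∈ Finset.univ) => by ring :
        ∀ i ∈ Finset.univ, (r i - t * s i) ^ 2
          = r i ^ 2 - 2 * t * (r i * s i) + t ^ 2 * s i ^ 2)]
      rw [Finset.sum_add_distrib, Finset.sum_sub_distrib, ← Finset.mul_sum, ← Finset.mul_sum,
        hCs]
    rw [hLHS, hq']
    nlinarith [htpos, hq, htC]
end
end

section
/- For any n ≥ 2 and any pairwise distinct inputs x₁, …, xₙ ∈ ℝ, there exist outputs y₁, …, yₙ ∈ ℝ, a continuous activation σ : ℝ → ℝ, and parameters (v̂, ŵ, b̂) ∈ ℝ^{n−1} × ℝ^{n−1} × ℝ^{n−1} such that (v̂, ŵ, b̂) is a strict local minimum of the one-hidden-layer loss F(v, w, b) = Σ_{i=1}^n (y_i − Σ_{j=1}^{n−1} v_j σ(w_j x_i + b_j))² but F(v̂, ŵ, b̂) > inf F. -/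
noncomputable section

namespace Stmt7Aux

def Lam (u : ℝ) : ℝ := max 0 (min 1 (2 - |u|))

lemma Lam_continuous : Continuous Lam :=
  continuous_const.max (continuous_const.min (continuous_const.sub continuous_abs))

lemma Lam_eq_one {u : ℝ} (h : |u| ≤ 1) : Lam u = 1 := by
  have h1 : (1:ℝ) ≤ 2 - |u| := by linarith
  simp [Lam, min_eq_left h1]

lemma Lam_eq_zero {u : ℝ} (h : 2 ≤ |u|) : Lam u = 0 := by
  have h1 : 2 - |u| ≤ 0 := by linarith
  have : min 1 (2 - |u|) ≤ 0 := le_trans (min_le_right _ _) h1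
  simp [Lam, max_eq_left this]

variable {I : Type*} [Fintype I] [Nonempty I]

def sig (pt val : I → ℝ) (ε : ℝ) (t : ℝ) : ℝ :=
  (∑ a, val a * Lam ((t - pt a) / ε)) + Metric.infDist t (Set.range pt)

lemma sig_continuous (pt val : I → ℝ) (ε : ℝ) : Continuous (sig pt val ε) := by
  apply Continuous.add
  · exact continuous_finset_sum _ fun a _ =>
      continuous_const.mul (Lam_continuous.comp ((continuous_id.sub continuous_const).div_const ε))
  · exact Metric.continuous_infDist_pt _

lemma sig_eq (pt val : I → ℝ) {ε : ℝ} (hε : 0 < ε)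
    (gap : ∀ a b : I, a ≠ b → 3 * ε ≤ |pt a - pt b|) (a : I) (t : ℝ)
    (ht : |t - pt a| ≤ ε) : sig pt val ε t = val a + |t - pt a| := by
  have hfar : ∀ b : I, b ≠ a → 2 * ε ≤ |t - pt b| := by
    intro b hb
    have h3 : 3 * ε ≤ |pt a - pt b| := gap a b (Ne.symm hb)
    have htri : |pt a - pt b| ≤ |pt a - t| + |t - pt b| := abs_sub_le _ _ _
    have habs : |pt a - t| = |t - pt a| := abs_sub_comm _ _
    rw [habs] at htri
    linarith
  have hsum : (∑ b, val b * Lam ((t - pt b) / ε)) = val a := by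
    rw [Finset.sum_eq_single a]
    · have : |(t - pt a) / ε| ≤ 1 := by
        rw [abs_div, abs_of_pos hε, div_le_one hε]; exact ht
      rw [Lam_eq_one this, mul_one]
    · intro b _ hb
      have h2 : (2:ℝ) ≤ |(t - pt b) / ε| := by
        rw [abs_div, abs_of_pos hε, le_div_iff₀ hε]
        have := hfar b hb; linarith
      rw [Lam_eq_zero h2, mul_zero]
    · intro h; exact absurd (Finset.mem_univ a) h
  have hinf : Metric.infDist t (Set.range pt) = |t - pt a| := by
    apply le_antisymm
    · have := Metric.infDist_le_dist_of_mem (Set.mem_range_self (f := pt) a) (x := t)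
      rwa [Real.dist_eq] at this
    · by_contra hlt
      push_neg at hlt
      obtain ⟨z, hz, hzd⟩ := (Metric.infDist_lt_iff (Set.range_nonempty pt)).1 hlt
      obtain ⟨b, rfl⟩ := hz
      rw [Real.dist_eq] at hzd
      rcases eq_or_ne b a with rfl | hb
      · exact lt_irrefl _ hzd
      · have := hfar b hb
        have h1 : |t - pt b| < ε := lt_of_lt_of_le hzd ht
        linarith
  rw [sig, hsum, hinf]

end Stmt7Aux

open Stmt7Aux in
/-- For any `n ≥ 2` pairwise distinct inputs `x₁, …, xₙ ∈ ℝ`, there exist outputs `y_i`,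
a continuous activation `σ`, and parameters `(v̂, ŵ, b̂) ∈ ℝ^{n−1} × ℝ^{n−1} × ℝ^{n−1}`
forming a strict local minimum of the one-hidden-layer quadratic loss
`F(v,w,b) = ∑_i (y_i − ∑_j v_j σ(w_j x_i + b_j))²` that is not a global minimum
(`F(v̂, ŵ, b̂) > inf F`). -/
theorem stmt7 (n : ℕ) (hn : 2 ≤ n) (x : Fin n → ℝ) (hx : Function.Injective x) :
    ∃ (y : Fin n → ℝ) (σ : ℝ → ℝ), Continuous σ ∧
      ∃ θ : (Fin (n - 1) → ℝ) × (Fin (n - 1) → ℝ) × (Fin (n - 1) → ℝ),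
        let F : (Fin (n - 1) → ℝ) × (Fin (n - 1) → ℝ) × (Fin (n - 1) → ℝ) → ℝ :=
          fun θ' => ∑ i, (y i - ∑ j, θ'.1 j * σ (θ'.2.1 j * x i + θ'.2.2 j)) ^ 2
        (∃ U : Set ((Fin (n - 1) → ℝ) × (Fin (n - 1) → ℝ) × (Fin (n - 1) → ℝ)),
            IsOpen U ∧ θ ∈ U ∧ ∀ θ' ∈ U, θ' ≠ θ → F θ < F θ') ∧
          (⨅ θ', F θ') < F θ := by
  obtain ⟨m, rfl⟩ : ∃ m, n = m + 1 := ⟨n - 1, by omega⟩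
  have hm : 1 ≤ m := by omega
  simp only [Nat.add_sub_cancel]
  -- target values
  set y : Fin (m + 1) → ℝ := fun i => if i = Fin.last m then -((m : ℝ) + 1) else 0 with hy
  -- the matrix of prescribed activation values
  set sh : Fin (m + 1) → Fin m → ℝ :=
    fun i j => (if i = j.castSucc then 1 else 0) - (if i = Fin.last m then 1 else 0) with hsh
  -- choose R generic
  obtain ⟨R, hR⟩ : ∃ R : ℝ, R ∉ Set.range (fun p : Fin m × Fin m × Fin (m+1) × Fin (m+1) =>
      (x p.2.2.1 - x p.2.2.2) / (((p.1 : ℕ) : ℝ) - ((p.2.1 : ℕ) : ℝ))) :=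
    ((Set.finite_range _).infinite_compl).nonempty
  set bh : Fin m → ℝ := fun j => (((j : ℕ) : ℝ) + 1) * R with hbh
  have hbR : ∀ j j' : Fin m, j ≠ j' → ∀ i i' : Fin (m+1), x i + bh j ≠ x i' + bh j' := by
    intro j j' hjj i i' heq
    have hne : ((j : ℕ) : ℝ) - ((j' : ℕ) : ℝ) ≠ 0 := by
      have h2 : (j : ℕ) ≠ (j' : ℕ) := fun h => hjj (Fin.ext h)
      rw [sub_ne_zero]
      exact fun h => h2 (Nat.cast_injective h)
    apply hR
    refine ⟨(j, j', i', i), ?_⟩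
    simp only [hbh] at heq
    show (x i' - x i) / (((j : ℕ) : ℝ) - ((j' : ℕ) : ℝ)) = R
    rw [div_eq_iff hne]
    linarith [heq]
  -- choose C generic
  obtain ⟨C, hC⟩ : ∃ C : ℝ, C ∉ Set.range (fun p : Fin m × Fin (m+1) × Fin (m+1) =>
      x p.2.1 + bh p.1 - x p.2.2) :=
    ((Set.finite_range _).infinite_compl).nonempty
  -- index of special points
  set pt : Fin (m+1) × Option (Fin m) → ℝ :=
    fun a => Option.casesOn a.2 (x a.1 + C) (fun j => x a.1 + bh j) with hptdef
  set vl : Fin (m+1) × Option (Fin m) → ℝ :=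
    fun a => Option.casesOn a.2 (y a.1) (fun j => sh a.1 j) with hvldef
  have hpt : Function.Injective pt := by
    rintro ⟨i, ja⟩ ⟨i', ja'⟩ heq
    match ja, ja' with
    | some j, some j' =>
      rcases eq_or_ne j j' with rfl | hjj
      · simp only [hptdef] at heq
        have : x i = x i' := by simpa using heq
        rw [hx this]
      · simp only [hptdef] at heq
        exact absurd heq (hbR j j' hjj i i')
    | some j, none =>
      exfalso; apply hC
      exact ⟨(j, i, i'), by simp only [hptdef] at heq; simp; linarith [heq]⟩
    | none, some j' =>
      exfalso; apply hC
      exact ⟨(j', i', i), by simp only [hptdef] at heq; simp; linarith [heq]⟩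
    | none, none =>
      simp only [hptdef] at heq
      have : x i = x i' := by simpa using heq
      rw [hx this]
  -- minimal gap
  classical
  have hI2 : ((0 : Fin (m+1)), (none : Option (Fin m))) ≠ ((Fin.last m), (none : Option (Fin m))) := by
    intro h
    have := congrArg Prod.fst h
    have h0 : (0 : ℕ) = m := congrArg Fin.val this
    omega
  set T : Finset ((Fin (m+1) × Option (Fin m)) × (Fin (m+1) × Option (Fin m))) :=
    Finset.univ.filter (fun ab => ab.1 ≠ ab.2) with hT
  have hTne : T.Nonempty := ⟨(((0 : Fin (m+1)), none), ((Fin.last m), none)), by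
    simp [hT, hI2]⟩
  set ε : ℝ := (T.inf' hTne fun ab => |pt ab.1 - pt ab.2|) / 3 with hεdef
  have hε : 0 < ε := by
    have : 0 < T.inf' hTne fun ab => |pt ab.1 - pt ab.2| := by
      rw [Finset.lt_inf'_iff]
      intro ab hab
      have hne : ab.1 ≠ ab.2 := (Finset.mem_filter.1 hab).2
      exact abs_pos.2 (sub_ne_zero.2 fun h => hne (hpt h))
    linarith
  have gap3 : ∀ a b : Fin (m+1) × Option (Fin m), a ≠ b → 3 * ε ≤ |pt a - pt b| := by
    intro a b hab
    have hmem : (a, b) ∈ T := by simp [hT, hab]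
    have := Finset.inf'_le (fun ab => |pt ab.1 - pt ab.2|) hmem
    rw [hεdef]
    linarith
  -- the activation
  set σ : ℝ → ℝ := sig pt vl ε with hσdef
  have hσcont : Continuous σ := sig_continuous pt vl ε
  have key : ∀ a t, |t - pt a| ≤ ε → σ t = vl a + |t - pt a| := fun a t ht =>
    sig_eq pt vl hε gap3 a t ht
  have keypt : ∀ a, σ (pt a) = vl a := by
    intro a
    have := key a (pt a) (by simp [hε.le])
    simpa using this
  -- bound on inputs
  obtain ⟨M0, hM0⟩ := Finite.exists_le (fun i => |x i|)
  set M : ℝ := max M0 0 with hM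
  have hMx : ∀ i, |x i| ≤ M := fun i => le_trans (hM0 i) (le_max_left _ _)
  have hM0' : (0:ℝ) ≤ M := le_max_right _ _
  -- radius
  set r : ℝ := min (1 / ((m:ℝ) + 1)) (ε / (M + 1)) with hrdef
  have hr : 0 < r := by
    apply lt_min
    · positivity
    · positivity
  have hr1 : r ≤ 1 / ((m:ℝ) + 1) := min_le_left _ _
  have hr2 : r * (M + 1) ≤ ε := by
    have h1 : r ≤ ε / (M + 1) := min_le_right _ _
    have h2 : (0:ℝ) < M + 1 := by linarith
    calc r * (M + 1) ≤ (ε / (M + 1)) * (M + 1) := by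
          apply mul_le_mul_of_nonneg_right h1 h2.le
      _ = ε := by field_simp
  have hrhalf : r ≤ 1 / 2 := by
    have : (2:ℝ) ≤ (m:ℝ) + 1 := by
      have : (1:ℝ) ≤ (m:ℝ) := by exact_mod_cast hm
      linarith
    calc r ≤ 1 / ((m:ℝ) + 1) := hr1
      _ ≤ 1 / 2 := by
        apply one_div_le_one_div_of_le <;> linarith
  have hmr : (m:ℝ) * r < 1 := by
    have h2 : (0:ℝ) < (m:ℝ) + 1 := by positivity
    calc (m:ℝ) * r ≤ (m:ℝ) * (1 / ((m:ℝ)+1)) := by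
          apply mul_le_mul_of_nonneg_left hr1 (Nat.cast_nonneg m)
      _ < 1 := by
        rw [mul_one_div, div_lt_one h2]
        linarith
  -- the candidate point
  set θh : (Fin m → ℝ) × (Fin m → ℝ) × (Fin m → ℝ) :=
    (fun _ => 1, fun _ => 1, bh) with hθh
  -- row sums of sh
  have hL1 : ∀ (v : Fin m → ℝ) (i0 : Fin m), (∑ j, v j * sh i0.castSucc j) = v i0 := by
    intro v i0
    have hrow : ∀ j, sh i0.castSucc j = if i0 = j then 1 else 0 := by
      intro j
      simp only [hsh, (Fin.castSucc_lt_last i0).ne, if_false, sub_zero, Fin.castSucc_inj]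
    rw [Finset.sum_congr rfl (fun j _ => by rw [hrow j])]
    simp [mul_ite]
  have hL2 : ∀ (v : Fin m → ℝ), (∑ j, v j * sh (Fin.last m) j) = -∑ j, v j := by
    intro v
    have hrow : ∀ j : Fin m, sh (Fin.last m) j = -1 := by
      intro j
      simp [hsh, (Fin.castSucc_lt_last j).ne']
    rw [Finset.sum_congr rfl (fun j _ => by rw [hrow j])]
    simp [← Finset.sum_neg_distrib]
  have hQall : ∀ v : Fin m → ℝ, (∑ i, (y i - ∑ j, v j * sh i j) ^ 2)
      = ((m:ℝ) + 1) + (∑ j, (v j - 1) ^ 2) + (∑ j, (v j - 1)) ^ 2 := by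
    intro v
    rw [Fin.sum_univ_castSucc]
    have hterm : ∀ i0 : Fin m,
        (y i0.castSucc - ∑ j, v j * sh i0.castSucc j) ^ 2 = (v i0) ^ 2 := by
      intro i0
      rw [hL1 v i0]
      have hy0 : y i0.castSucc = 0 := by
        simp [hy, (Fin.castSucc_lt_last i0).ne]
      rw [hy0]; ring
    have hlast : (y (Fin.last m) - ∑ j, v j * sh (Fin.last m) j) ^ 2
        = ((∑ j, v j) - ((m:ℝ) + 1)) ^ 2 := by
      rw [hL2 v]
      have hy0 : y (Fin.last m) = -((m:ℝ) + 1) := by simp [hy]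
      rw [hy0]; ring
    rw [Finset.sum_congr rfl (fun i0 _ => hterm i0), hlast]
    have e1 : ∑ j, (v j - 1) ^ 2 = (∑ j, (v j) ^ 2) - 2 * (∑ j, v j) + m := by
      rw [Finset.sum_congr rfl (fun j _ => show (v j - 1)^2 = (v j)^2 - 2 * v j + 1 by ring)]
      rw [Finset.sum_add_distrib, Finset.sum_sub_distrib, ← Finset.mul_sum]
      simp [Finset.card_univ]
    have e2 : ∑ j, (v j - 1) = (∑ j, v j) - m := by
      rw [Finset.sum_sub_distrib]
      simp [Finset.card_univ]
    rw [e1, e2]; ring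
  refine ⟨y, σ, hσcont, θh, ?_⟩
  set F : ((Fin m → ℝ) × (Fin m → ℝ) × (Fin m → ℝ)) → ℝ :=
    fun θ' => ∑ i, (y i - ∑ j, θ'.1 j * σ (θ'.2.1 j * x i + θ'.2.2 j)) ^ 2 with hFdef0
  have hFdef : ∀ θ' : (Fin m → ℝ) × (Fin m → ℝ) × (Fin m → ℝ),
      F θ' = ∑ i, (y i - ∑ j, θ'.1 j * σ (θ'.2.1 j * x i + θ'.2.2 j)) ^ 2 := fun _ => rfl
  show (∃ U, IsOpen U ∧ θh ∈ U ∧ ∀ θ' ∈ U, θ' ≠ θh → F θh < F θ') ∧ (⨅ θ', F θ') < F θh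
  have hFθh : F θh = (m:ℝ) + 1 := by
    rw [hFdef]
    have hinner : ∀ i, (∑ j, θh.1 j * σ (θh.2.1 j * x i + θh.2.2 j))
        = ∑ j, (fun _ : Fin m => (1:ℝ)) j * sh i j := by
      intro i
      apply Finset.sum_congr rfl
      intro j _
      have hx1 : θh.2.1 j * x i + θh.2.2 j = pt (i, some j) := by
        simp [hθh, hptdef]
      have : θh.1 j = 1 := rfl
      rw [this, hx1, keypt (i, some j)]
    rw [Finset.sum_congr rfl (fun i _ => by rw [hinner i]), hQall (fun _ => 1)]
    simp
  constructor
  · -- strict local minimum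
    refine ⟨Metric.ball θh r, Metric.isOpen_ball, Metric.mem_ball_self hr, ?_⟩
    rintro ⟨v, wv, bv⟩ hU hne
    rw [Metric.mem_ball] at hU
    have hvb : ∀ j, |v j - 1| < r := by
      intro j
      have h2 := dist_le_pi_dist v (fun _ => (1:ℝ)) j
      have h3 : dist v (fun _ => (1:ℝ)) ≤ dist ((v, wv, bv)) θh := by
        rw [Prod.dist_eq]; exact le_max_left _ _
      have h4 := lt_of_le_of_lt (le_trans h2 h3) hU
      rwa [Real.dist_eq] at h4
    have hwb : ∀ j, |wv j - 1| < r := by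
      intro j
      have h2 := dist_le_pi_dist wv (fun _ => (1:ℝ)) j
      have h3 : dist wv (fun _ => (1:ℝ)) ≤ dist ((v, wv, bv)) θh := by
        rw [Prod.dist_eq, Prod.dist_eq]
        exact le_trans (le_max_left _ _) (le_max_right _ _)
      have h4 := lt_of_le_of_lt (le_trans h2 h3) hU
      rwa [Real.dist_eq] at h4
    have hbb : ∀ j, |bv j - bh j| < r := by
      intro j
      have h2 := dist_le_pi_dist bv bh j
      have h3 : dist bv bh ≤ dist ((v, wv, bv)) θh := by
        rw [Prod.dist_eq, Prod.dist_eq]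
        exact le_trans (le_max_right _ _) (le_max_right _ _)
      have h4 := lt_of_le_of_lt (le_trans h2 h3) hU
      rwa [Real.dist_eq] at h4
    have hvpos : ∀ j, 0 < v j := by
      intro j
      have h1 := abs_lt.1 (hvb j)
      have := lt_of_lt_of_le (hvb j) hrhalf
      linarith [abs_lt.1 (hvb j)]
    have hclose : ∀ i j, |(wv j * x i + bv j) - pt (i, some j)| ≤ ε := by
      intro i j
      have hrw : (wv j * x i + bv j) - pt (i, some j)
          = (wv j - 1) * x i + (bv j - bh j) := by
        simp only [hptdef]; ring
      rw [hrw]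
      calc |(wv j - 1) * x i + (bv j - bh j)|
          ≤ |(wv j - 1) * x i| + |bv j - bh j| := abs_add_le _ _
        _ = |wv j - 1| * |x i| + |bv j - bh j| := by rw [abs_mul]
        _ ≤ r * M + r := add_le_add
            (mul_le_mul (hwb j).le (hMx i) (abs_nonneg _) hr.le) (hbb j).le
        _ = r * (M + 1) := by ring
        _ ≤ ε := hr2
    have hσv : ∀ i j, σ (wv j * x i + bv j)
        = sh i j + |(wv j * x i + bv j) - pt (i, some j)| := by
      intro i j
      have := key (i, some j) _ (hclose i j)
      simpa [hvldef] using this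
    have htermge : ∀ i j, v j * sh i j ≤ v j * σ (wv j * x i + bv j) := by
      intro i j
      rw [hσv i j]
      have h1 := abs_nonneg ((wv j * x i + bv j) - pt (i, some j))
      nlinarith [hvpos j]
    have hPL : ∀ i, (∑ j, v j * sh i j) ≤ ∑ j, v j * σ (wv j * x i + bv j) :=
      fun i => Finset.sum_le_sum fun j _ => htermge i j
    have hyL : ∀ i, y i < ∑ j, v j * sh i j := by
      intro i
      induction i using Fin.lastCases with
      | last =>
        rw [hL2 v]
        have hsum : (∑ j, v j) ≤ ∑ _j : Fin m, ((1:ℝ) + r) :=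
          Finset.sum_le_sum fun j _ => by linarith [abs_lt.1 (hvb j)]
        have hcs : (∑ _j : Fin m, ((1:ℝ) + r)) = m * (1 + r) := by
          simp [Finset.card_univ]
          ring
        have hy0 : y (Fin.last m) = -((m:ℝ) + 1) := by simp [hy]
        rw [hy0]
        nlinarith [hmr]
      | cast i0 =>
        rw [hL1 v i0]
        have hy0 : y i0.castSucc = 0 := by simp [hy, (Fin.castSucc_lt_last i0).ne]
        rw [hy0]
        linarith [abs_lt.1 (hvb i0), lt_of_lt_of_le (hvb i0) hrhalf]
    have hsq : ∀ i, (y i - ∑ j, v j * sh i j) ^ 2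
        ≤ (y i - ∑ j, v j * σ (wv j * x i + bv j)) ^ 2 := by
      intro i
      have h1 := hyL i
      have h2 := hPL i
      have e1 : (y i - ∑ j, v j * sh i j) ^ 2 = ((∑ j, v j * sh i j) - y i) ^ 2 := by ring
      have e2 : (y i - ∑ j, v j * σ (wv j * x i + bv j)) ^ 2
          = ((∑ j, v j * σ (wv j * x i + bv j)) - y i) ^ 2 := by ring
      rw [e1, e2]
      apply pow_le_pow_left₀ (by linarith) (by linarith)
    have hFQ : ((m:ℝ) + 1) + (∑ j, (v j - 1) ^ 2) + (∑ j, (v j - 1)) ^ 2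
        ≤ F (v, wv, bv) := by
      rw [hFdef, ← hQall v]
      exact Finset.sum_le_sum fun i _ => hsq i
    by_cases hveq : v = fun _ => (1:ℝ)
    · -- parameters (w,b) differ somewhere
      have hex : ∃ j, wv j ≠ 1 ∨ bv j ≠ bh j := by
        by_contra hcon
        push_neg at hcon
        apply hne
        have hw : wv = fun _ => (1:ℝ) := funext fun j => (hcon j).1
        have hb2 : bv = bh := funext fun j => (hcon j).2
        rw [hθh, hveq, hw, hb2]
      obtain ⟨j0, hj0⟩ := hex
      have hx01 : x 0 ≠ x (Fin.last m) := by
        intro h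
        have h2 := hx h
        have h3 : (0:ℕ) = m := congrArg Fin.val h2
        omega
      have hexi : ∃ i : Fin (m+1), wv j0 * x i + bv j0 ≠ pt (i, some j0) := by
        by_contra hcon
        push_neg at hcon
        have e0 := hcon 0
        have e1 := hcon (Fin.last m)
        simp only [hptdef] at e0 e1
        have hfac : (wv j0 - 1) * (x 0 - x (Fin.last m)) = 0 := by linarith
        have hw1 : wv j0 = 1 := by
          rcases mul_eq_zero.1 hfac with h | h
          · linarith
          · exact absurd (sub_eq_zero.1 h) hx01
        have hb1 : bv j0 = bh j0 := by
          rw [hw1] at e0; linarith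
        rcases hj0 with h | h
        · exact h hw1
        · exact h hb1
      obtain ⟨i0, hi0⟩ := hexi
      have hstrict : v j0 * sh i0 j0 < v j0 * σ (wv j0 * x i0 + bv j0) := by
        rw [hσv i0 j0]
        have h2 : 0 < |(wv j0 * x i0 + bv j0) - pt (i0, some j0)| :=
          abs_pos.2 (sub_ne_zero.2 hi0)
        nlinarith [hvpos j0]
      have hPLs : (∑ j, v j * sh i0 j) < ∑ j, v j * σ (wv j * x i0 + bv j) :=
        Finset.sum_lt_sum (fun j _ => htermge i0 j) ⟨j0, Finset.mem_univ _, hstrict⟩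
      have hsqs : (y i0 - ∑ j, v j * sh i0 j) ^ 2
          < (y i0 - ∑ j, v j * σ (wv j * x i0 + bv j)) ^ 2 := by
        have h1 := hyL i0
        have e1 : (y i0 - ∑ j, v j * sh i0 j) ^ 2 = ((∑ j, v j * sh i0 j) - y i0) ^ 2 := by
          ring
        have e2 : (y i0 - ∑ j, v j * σ (wv j * x i0 + bv j)) ^ 2
            = ((∑ j, v j * σ (wv j * x i0 + bv j)) - y i0) ^ 2 := by ring
        rw [e1, e2]
        apply pow_lt_pow_left₀ (by linarith) (by linarith) (by norm_num)
      have hQv : (∑ i, (y i - ∑ j, v j * sh i j) ^ 2) = (m:ℝ) + 1 := by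
        rw [hQall v, hveq]
        simp
      have hFs : (∑ i, (y i - ∑ j, v j * sh i j) ^ 2) < F (v, wv, bv) := by
        rw [hFdef]
        exact Finset.sum_lt_sum (fun i _ => hsq i) ⟨i0, Finset.mem_univ _, hsqs⟩
      rw [hFθh, ← hQv]
      exact hFs
    · have hex : ∃ j, v j ≠ 1 := by
        by_contra hcon
        push_neg at hcon
        exact hveq (funext hcon)
      obtain ⟨j0, hj0⟩ := hex
      have hD : 0 < ∑ j, (v j - 1) ^ 2 := by
        apply Finset.sum_pos' (fun j _ => sq_nonneg _)
        refine ⟨j0, Finset.mem_univ _, ?_⟩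
        have h2 : v j0 - 1 ≠ 0 := sub_ne_zero.2 hj0
        positivity
      have hE := sq_nonneg (∑ j, (v j - 1))
      rw [hFθh]
      linarith [hFQ]
  · -- not a global minimum
    set j0 : Fin m := ⟨0, hm⟩ with hj0
    set θs : (Fin m → ℝ) × (Fin m → ℝ) × (Fin m → ℝ) :=
      (fun j => if j = j0 then 1 else 0, fun j => if j = j0 then 1 else 0, fun _ => C)
      with hθs
    have hFθs : F θs = 0 := by
      rw [hFdef]
      apply Finset.sum_eq_zero
      intro i _
      have hsum : (∑ j, θs.1 j * σ (θs.2.1 j * x i + θs.2.2 j)) = y i := by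
        rw [Finset.sum_eq_single j0]
        · have h4 : (1:ℝ) * x i + C = pt (i, none) := by simp [hptdef]
          have h5 := keypt (i, none)
          show θs.1 j0 * σ (θs.2.1 j0 * x i + θs.2.2 j0) = y i
          simp only [hθs, if_true]
          rw [h4, h5, one_mul]
        · intro j _ hj
          have h1 : θs.1 j = 0 := by simp [hθs, hj]
          rw [h1, zero_mul]
        · intro h
          exact absurd (Finset.mem_univ j0) h
      rw [hsum]
      ring
    have hbdd : BddBelow (Set.range F) := by
      refine ⟨0, ?_⟩
      rintro z ⟨θ', rfl⟩
      rw [hFdef]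
      exact Finset.sum_nonneg fun i _ => sq_nonneg _
    calc (⨅ θ', F θ') ≤ F θs := ciInf_le hbdd θs
      _ = 0 := hFθs
      _ < (m:ℝ) + 1 := by positivity
      _ = F θh := hFθh.symm
end
end

section
/- Let f : ℝ^P × ℝ^{d_x} → ℝ be a parametric model such that θ ↦ f(θ, x_i) is differentiable for each i, and let F(θ) = (1/n) Σ_{i=1}^n (y_i − f(θ, x_i))² for data (x₁,y₁), …, (xₙ,yₙ) ∈ ℝ^{d_x} × ℝ. Suppose θ* is a critical point of F (the gradient of F vanishes at θ*) and the n gradient vectors ∇_θ f(θ*, x_i) ∈ ℝ^P, i = 1, …, n, are linearly independent. Then f(θ*, x_i) = y_i for all i, so F(θ*) = 0 and θ* is a global minimum of F. -/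
/-- If `θ*` is a critical point of the quadratic loss
`F(θ) = (1/n) ∑_i (y_i − f(θ, x_i))²` of a differentiable parametric model `f`, and the
`n` gradients (derivatives) `∇_θ f(θ*, x_i)` are linearly independent, then
`f(θ*, x_i) = y i` for all `i`, so `F(θ*) = 0` and `θ*` is a global minimum of `F`. -/
theorem stmt10 (P dx n : ℕ) (f : (Fin P → ℝ) → (Fin dx → ℝ) → ℝ)
    (x : Fin n → Fin dx → ℝ) (y : Fin n → ℝ)
    (hdiff : ∀ i, Differentiable ℝ (fun θ => f θ (x i)))
    (F : (Fin P → ℝ) → ℝ)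
    (hF : F = fun θ => (1 / (n : ℝ)) * ∑ i, (y i - f θ (x i)) ^ 2)
    (θs : Fin P → ℝ) (hcrit : fderiv ℝ F θs = 0)
    (hli : LinearIndependent ℝ (fun i : Fin n => fderiv ℝ (fun θ => f θ (x i)) θs)) :
    (∀ i, f θs (x i) = y i) ∧ F θs = 0 ∧ ∀ θ, F θs ≤ F θ := by
  rcases Nat.eq_zero_or_pos n with hn | hn
  · subst hn hF
    refine ⟨fun i => Fin.elim0 i, by simp, fun θ => by simp⟩
  have hn' : (n : ℝ) ≠ 0 := Nat.cast_ne_zero.mpr hn.ne'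
  set D : Fin n → (Fin P → ℝ) →L[ℝ] ℝ := fun i => fderiv ℝ (fun θ => f θ (x i)) θs with hD
  have hterm : ∀ i : Fin n, HasFDerivAt (fun θ => (y i - f θ (x i)) ^ 2)
      ((2 * (y i - f θs (x i))) • (-(D i))) θs := by
    intro i
    have h1 : HasFDerivAt (fun θ => y i - f θ (x i)) (-(D i)) θs := by
      simpa using (hasFDerivAt_const (y i) θs).fun_sub ((hdiff i θs).hasFDerivAt)
    simpa [pow_two, two_mul, add_smul] using h1.fun_mul h1
  have hFd : HasFDerivAt F
      ((1 / (n : ℝ)) • ∑ i, (2 * (y i - f θs (x i))) • (-(D i))) θs := by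
    rw [hF]
    exact (HasFDerivAt.fun_sum (fun i _ => hterm i)).const_mul _
  have hzero : ((1 / (n : ℝ)) • ∑ i, (2 * (y i - f θs (x i))) • (-(D i))) = 0 := by
    rw [← hFd.fderiv, hcrit]
  have hsum : ∑ i, (-(1 / (n : ℝ)) * (2 * (y i - f θs (x i)))) • (D i) = 0 := by
    rw [← hzero, Finset.smul_sum]
    congr 1; ext i
    rw [smul_smul]
    simp [mul_comm, mul_assoc, neg_mul, mul_neg]
  have hcoef := Fintype.linearIndependent_iff.mp hli _ hsum
  have heq : ∀ i, f θs (x i) = y i := by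
    intro i
    have := hcoef i
    have h2 : y i - f θs (x i) = 0 := by
      field_simp at this
      linarith
    linarith
  refine ⟨heq, ?_, ?_⟩
  · rw [hF]; simp [heq]
  · intro θ
    rw [hF]
    simp only [heq, sub_self]
    have : (0:ℝ) ≤ (1 / (n : ℝ)) * ∑ i, (y i - f θ (x i)) ^ 2 := by positivity
    simpa using this
end

section
/- Let f : ℝ^P × ℝ^{d_x} → ℝ be a parametric model such that θ ↦ f(θ, x) is continuously differentiable for every x, let F(θ) = (1/n) Σ_{i=1}^n (y_i − f(θ, x_i))², and let G(θ) ∈ ℝ^{P×n} be the matrix whose i-th column is ∇_θ f(θ, x_i), with K(θ) = G(θ)ᵀG(θ). Suppose a sequence is generated by θ(k+1) = 𝒜(θ(k)) for a continuous map 𝒜 : ℝ^P → ℝ^P, and there exists c > 0 such that the smallest eigenvalue of K(θ(k)) is at least c for every k. If θ* is a limit point of the sequence {θ(k)} and θ* is a critical point of F, then θ* is a global minimum of F with F(θ*) = 0. -/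
open scoped RealInnerProductSpace

/-- Suppose `f(θ, x)` is continuously differentiable in `θ`, and let
`F(θ) = (1/n) ∑_i (y_i − f(θ, x_i))²` and `K(θ)_{ij} = ⟪∇_θ f(θ, x_i), ∇_θ f(θ, x_j)⟫`
(the NTK matrix `K = Gᵀ G`). If a sequence `θ(k+1) = 𝒜(θ(k))` with `𝒜` continuous
satisfies `λ_min(K(θ(k))) ≥ c > 0` for all `k` (stated via the quadratic form), and
`θ*` is a limit point of the sequence which is a critical point of `F`, then `θ*` is a
global minimum of `F` with `F(θ*) = 0`. -/
theorem stmt11 (P dx n : ℕ)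
    (f : EuclideanSpace ℝ (Fin P) → (Fin dx → ℝ) → ℝ)
    (hf : ∀ x : Fin dx → ℝ, ContDiff ℝ 1 (fun θ => f θ x))
    (x : Fin n → Fin dx → ℝ) (y : Fin n → ℝ)
    (F : EuclideanSpace ℝ (Fin P) → ℝ)
    (hF : F = fun θ => (1 / (n : ℝ)) * ∑ i, (y i - f θ (x i)) ^ 2)
    (K : EuclideanSpace ℝ (Fin P) → Matrix (Fin n) (Fin n) ℝ)
    (hK : K = fun θ => Matrix.of fun i j =>
        ⟪gradient (fun θ' => f θ' (x i)) θ, gradient (fun θ' => f θ' (x j)) θ⟫)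
    (𝒜 : EuclideanSpace ℝ (Fin P) → EuclideanSpace ℝ (Fin P)) (h𝒜 : Continuous 𝒜)
    (θseq : ℕ → EuclideanSpace ℝ (Fin P)) (hseq : ∀ k, θseq (k + 1) = 𝒜 (θseq k))
    (c : ℝ) (hc : 0 < c)
    (heig : ∀ k, ∀ v : Fin n → ℝ,
        c * ∑ i, (v i) ^ 2 ≤ ∑ i, ∑ j, v i * v j * K (θseq k) i j)
    (θs : EuclideanSpace ℝ (Fin P))
    (hlim : ∃ φ : ℕ → ℕ, StrictMono φ ∧
        Filter.Tendsto (fun k => θseq (φ k)) Filter.atTop (nhds θs))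
    (hcrit : fderiv ℝ F θs = 0) :
    F θs = 0 ∧ ∀ θ, F θs ≤ F θ := by
  have hFnonneg : ∀ θ, 0 ≤ F θ := by
    intro θ
    rw [hF]
    exact mul_nonneg (by positivity) (Finset.sum_nonneg fun i _ => sq_nonneg _)
  -- residual and gradients at θs
  set r : Fin n → ℝ := fun i => y i - f θs (x i) with hr
  set g : Fin n → EuclideanSpace ℝ (Fin P) :=
    fun i => gradient (fun θ' => f θ' (x i)) θs with hg
  set D : Fin n → (EuclideanSpace ℝ (Fin P) →L[ℝ] ℝ) :=
    fun i => fderiv ℝ (fun θ' => f θ' (x i)) θs with hD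
  have hfd : ∀ i, HasFDerivAt (fun θ' => f θ' (x i)) (D i) θs :=
    fun i => ((hf (x i)).differentiable one_ne_zero θs).hasFDerivAt
  have hDinner : ∀ i v, (D i) v = ⟪g i, v⟫ := by
    intro i v
    rw [hg]
    simp only [gradient]
    rw [InnerProductSpace.toDual_symm_apply]
  -- continuity of the entries of K
  have hgcont : ∀ xi : Fin dx → ℝ,
      Continuous (fun θ => gradient (fun θ' => f θ' xi) θ) := by
    intro xi
    have hc1 : Continuous (fun θ => fderiv ℝ (fun θ' => f θ' xi) θ) :=
      (hf xi).continuous_fderiv one_ne_zero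
    have heq : (fun θ => gradient (fun θ' => f θ' xi) θ) = fun θ =>
        (InnerProductSpace.toDual ℝ (EuclideanSpace ℝ (Fin P))).symm
          (fderiv ℝ (fun θ' => f θ' xi) θ) := by
      funext θ; rfl
    rw [heq]
    exact ((InnerProductSpace.toDual ℝ (EuclideanSpace ℝ (Fin P))).symm.continuous.comp hc1)
  have hKcont : ∀ i j, Continuous (fun θ => K θ i j) := by
    intro i j
    rw [hK]
    exact Continuous.inner (hgcont (x i)) (hgcont (x j))
  -- pass the eigenvalue bound to the limit point
  obtain ⟨φ, hφ, htend⟩ := hlim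
  have heigs : ∀ v : Fin n → ℝ,
      c * ∑ i, (v i) ^ 2 ≤ ∑ i, ∑ j, v i * v j * K θs i j := by
    intro v
    have hcontQ : Continuous (fun θ => ∑ i, ∑ j, v i * v j * K θ i j) := by
      apply continuous_finset_sum
      intro i _
      apply continuous_finset_sum
      intro j _
      exact continuous_const.mul (hKcont i j)
    have h1 : Filter.Tendsto (fun k => ∑ i, ∑ j, v i * v j * K (θseq (φ k)) i j)
        Filter.atTop (nhds (∑ i, ∑ j, v i * v j * K θs i j)) :=
      (hcontQ.tendsto θs).comp htend
    exact ge_of_tendsto' h1 fun k => heig (φ k) v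
  -- compute the derivative of F at θs
  have hL : HasFDerivAt F
      ((1 / (n : ℝ)) • ∑ i, (r i • ((0 : EuclideanSpace ℝ (Fin P) →L[ℝ] ℝ) - D i)
        + r i • ((0 : EuclideanSpace ℝ (Fin P) →L[ℝ] ℝ) - D i))) θs := by
    rw [hF]
    have : ∀ i : Fin n, HasFDerivAt (fun θ => (y i - f θ (x i)) ^ 2)
        (r i • ((0 : EuclideanSpace ℝ (Fin P) →L[ℝ] ℝ) - D i)
          + r i • ((0 : EuclideanSpace ℝ (Fin P) →L[ℝ] ℝ) - D i)) θs := by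
      intro i
      have h2 : HasFDerivAt (fun θ => (y i - f θ (x i)) * (y i - f θ (x i))) _ θs :=
        ((hasFDerivAt_const (y i) θs).sub (hfd i)).mul
        ((hasFDerivAt_const (y i) θs).sub (hfd i))
      simpa [pow_two, hr] using h2
    exact HasFDerivAt.const_mul (HasFDerivAt.fun_sum fun i _ => this i) _
  have hLzero : ((1 / (n : ℝ)) • ∑ i : Fin n,
      (r i • ((0 : EuclideanSpace ℝ (Fin P) →L[ℝ] ℝ) - D i)
        + r i • ((0 : EuclideanSpace ℝ (Fin P) →L[ℝ] ℝ) - D i))) = 0 := by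
    rw [← hL.fderiv]; exact hcrit
  -- key consequence of criticality
  have hSv : ∀ v : EuclideanSpace ℝ (Fin P), ∑ i, r i * ⟪g i, v⟫ = 0 := by
    intro v
    rcases Nat.eq_zero_or_pos n with hn | hn
    · subst hn; simp
    have h0 := congrArg (fun L : EuclideanSpace ℝ (Fin P) →L[ℝ] ℝ => L v) hLzero
    simp only [ContinuousLinearMap.smul_apply, ContinuousLinearMap.sum_apply,
      ContinuousLinearMap.add_apply, ContinuousLinearMap.sub_apply,
      ContinuousLinearMap.zero_apply, zero_sub, smul_eq_mul,
      ContinuousLinearMap.coe_zero, Pi.zero_apply] at h0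
    have hsum : ∑ i : Fin n, (r i * -(D i v) + r i * -(D i v)) = 0 := by
      have hne : (1 / (n : ℝ)) ≠ 0 := by
        have : (0:ℝ) < (n:ℝ) := Nat.cast_pos.mpr hn
        positivity
      exact (mul_eq_zero.mp h0).resolve_left hne
    have heq2 : ∑ i : Fin n, (r i * -(D i) v + r i * -(D i) v)
        = (-2 : ℝ) * ∑ i, r i * (D i v) := by
      rw [Finset.mul_sum]
      apply Finset.sum_congr rfl
      intro i _
      ring
    rw [heq2] at hsum
    have h2 : ∑ i, r i * (D i v) = 0 := by linarith
    simpa [hDinner] using h2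
  -- plug in v = ∑ r i • g i to conclude the residual vanishes
  have hquad : ∑ i, ∑ j, r i * r j * K θs i j = 0 := by
    have h1 := hSv (∑ j, r j • g j)
    have h2 : ∀ i : Fin n, ⟪g i, ∑ j, r j • g j⟫ = ∑ j, r j * ⟪g i, g j⟫ := by
      intro i
      rw [inner_sum]
      congr 1; ext j; rw [real_inner_smul_right]
    calc ∑ i, ∑ j, r i * r j * K θs i j
        = ∑ i, r i * ∑ j, r j * ⟪g i, g j⟫ := by
          apply Finset.sum_congr rfl
          intro i _
          rw [Finset.mul_sum]
          apply Finset.sum_congr rfl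
          intro j _
          rw [hK]
          simp only [Matrix.of_apply]
          ring
      _ = ∑ i, r i * ⟪g i, ∑ j, r j • g j⟫ := by
          apply Finset.sum_congr rfl; intro i _; rw [h2 i]
      _ = 0 := h1
  have hrsum : ∑ i, (r i) ^ 2 = 0 := by
    have := heigs r
    rw [hquad] at this
    have h1 : c * ∑ i, (r i) ^ 2 ≤ 0 := this
    have h2 : 0 ≤ ∑ i, (r i) ^ 2 := Finset.sum_nonneg fun i _ => sq_nonneg _
    have h4 : c * ∑ i, (r i) ^ 2 ≤ c * 0 := by simpa using h1
    exact le_antisymm (le_of_mul_le_mul_left h4 hc) h2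
  have hFzero : F θs = 0 := by
    have hs0 : (∑ i, (y i - f θs (x i)) ^ 2) = 0 := hrsum
    rw [hF]
    simp only
    rw [hs0, mul_zero]
  exact ⟨hFzero, fun θ => hFzero ▸ hFnonneg θ⟩
end

section
/- Let x₁, …, xₙ ∈ ℝ^d be pairwise distinct, let y₁, …, yₙ ∈ {−1, +1}, and let m ≥ n + 1. Then there exist parameters (a_j, w_j, b_j)_{j=1}^m such that the one-hidden-layer ReQU network f(x) = Σ_{j=1}^m a_j · (max{w_jᵀx + b_j, 0})² correctly classifies every sample, i.e., y_i f(x_i) > 0 for all i = 1, …, n. -/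
/-- dot product with fixed vector as a linear map -/
noncomputable def dotL {d : ℕ} (c : Fin d → ℝ) : (Fin d → ℝ) →ₗ[ℝ] ℝ where
  toFun v := ∑ k, v k * c k
  map_add' u v := by simp [add_mul, Finset.sum_add_distrib]
  map_smul' r v := by simp [Finset.mul_sum, mul_assoc]

lemma exists_sep_dir {n d : ℕ} (x : Fin n → Fin d → ℝ) (hx : Function.Injective x) :
    ∃ v : Fin d → ℝ, Function.Injective (fun i => ∑ k, v k * x i k) := by
  by_contra h
  push_neg at h
  set ι := {p : Fin n × Fin n // p.1 ≠ p.2}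
  have hcover : ⋃ q : ι, ((LinearMap.ker (dotL (fun k => x q.1.1 k - x q.1.2 k)) :
      Subspace ℝ (Fin d → ℝ)) : Set (Fin d → ℝ)) = Set.univ := by
    ext v
    simp only [Set.mem_iUnion, Set.mem_univ, iff_true]
    obtain ⟨i, j, hij, hne⟩ := Function.not_injective_iff.mp (h v)
    refine ⟨⟨(i, j), hne⟩, ?_⟩
    simp only [SetLike.mem_coe, LinearMap.mem_ker]
    show ∑ k, v k * (x i k - x j k) = 0
    have : ∑ k, v k * x i k = ∑ k, v k * x j k := by
      simpa [mul_comm] using hij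
    simp [mul_sub, Finset.sum_sub_distrib, this]
  obtain ⟨q, hq⟩ := Subspace.exists_eq_top_of_iUnion_eq_univ hcover
  have hxne : x q.1.1 ≠ x q.1.2 := fun hcon => q.2 (hx hcon)
  obtain ⟨k0, hk0⟩ := Function.ne_iff.mp hxne
  have : (Pi.single k0 1 : Fin d → ℝ) ∈ LinearMap.ker (dotL (fun k => x q.1.1 k - x q.1.2 k)) := by
    rw [hq]; trivial
  rw [LinearMap.mem_ker] at this
  have : x q.1.1 k0 - x q.1.2 k0 = 0 := by
    simpa [dotL, Pi.single_apply] using this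
  exact hk0 (by linarith)

/-- 1D ReQU interpolation of signs at strictly increasing points -/
lemma requ_interp : ∀ (n : ℕ) (t : Fin n → ℝ), StrictMono t → ∀ z : Fin n → ℝ,
    (∀ i, z i = 1 ∨ z i = -1) →
    ∃ a b : Fin n → ℝ, ∀ i, 0 < z i * ∑ j, a j * (max (t i + b j) 0) ^ 2 := by
  intro n
  induction n with
  | zero => exact fun t _ z _ => ⟨0, 0, fun i => i.elim0⟩
  | succ n ih =>
    intro t ht z hz
    obtain ⟨a, b, hab⟩ := ih (t ∘ Fin.castSucc) (ht.comp Fin.strictMono_castSucc)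
      (z ∘ Fin.castSucc) (fun i => hz _)
    set c := t (Fin.last n) with hc
    set ε : ℝ := if h : 0 < n then c - t (Fin.castSucc ⟨n - 1, by omega⟩) else 1 with hε
    have hεpos : 0 < ε := by
      rw [hε]
      split_ifs with h
      · have : Fin.castSucc ⟨n - 1, by omega⟩ < Fin.last n := Fin.castSucc_lt_last _
        linarith [ht this]
      · norm_num
    have hεle : ∀ i : Fin n, t (Fin.castSucc i) ≤ c - ε := by
      intro i
      have hn : 0 < n := i.pos
      rw [hε, dif_pos hn]
      have : t (Fin.castSucc i) ≤ t (Fin.castSucc ⟨n - 1, by omega⟩) := by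
        apply ht.monotone
        simp [Fin.le_def]
        omega
      linarith
    set β := ε / 2 - c with hβ
    set F := ∑ j, a j * (max (c + b j) 0) ^ 2 with hF
    set α := z (Fin.last n) * (|F| + 1) / (ε / 2) ^ 2 with hα
    refine ⟨Fin.snoc a α, Fin.snoc b β, ?_⟩
    intro i
    induction i using Fin.lastCases with
    | last =>
      rw [Fin.sum_univ_castSucc]
      simp only [Fin.snoc_castSucc, Fin.snoc_last]
      have h1 : max (t (Fin.last n) + β) 0 = ε / 2 := by
        rw [hβ, ← hc]
        rw [max_eq_left (by linarith)]
        ring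
      rw [h1]
      have h2 : α * (ε / 2) ^ 2 = z (Fin.last n) * (|F| + 1) := by
        rw [hα]
        field_simp
      have hzsq : z (Fin.last n) * z (Fin.last n) = 1 := by
        rcases hz (Fin.last n) with h | h <;> rw [h] <;> norm_num
      have habs : |z (Fin.last n)| = 1 := by
        rcases hz (Fin.last n) with h | h <;> rw [h] <;> norm_num
      have hsum : ∑ j, a j * (max (t (Fin.last n) + b j) 0) ^ 2 = F := by rw [hF, ← hc]
      rw [h2, hsum]
      have hlow : -|F| ≤ z (Fin.last n) * F := by
        have := abs_mul (z (Fin.last n)) F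
        have := neg_abs_le (z (Fin.last n) * F)
        rw [abs_mul, habs, one_mul] at this
        linarith
      calc (0:ℝ) < z (Fin.last n) * F + |F| + 1 := by linarith
        _ = z (Fin.last n) * (F + z (Fin.last n) * (|F| + 1)) := by rw [mul_add, ← mul_assoc, hzsq]; ring
    | cast i =>
      rw [Fin.sum_univ_castSucc]
      simp only [Fin.snoc_castSucc, Fin.snoc_last]
      have h0 : max (t (Fin.castSucc i) + β) 0 = 0 := by
        rw [max_eq_right]
        have := hεle i
        rw [hβ]
        linarith
      rw [h0]
      simpa using hab i

lemma requ_interp' {n : ℕ} (t : Fin n → ℝ) (ht : Function.Injective t) (z : Fin n → ℝ)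
    (hz : ∀ i, z i = 1 ∨ z i = -1) :
    ∃ a b : Fin n → ℝ, ∀ i, 0 < z i * ∑ j, a j * (max (t i + b j) 0) ^ 2 := by
  set σ := Tuple.sort t with hσ
  have hmono : StrictMono (t ∘ σ) :=
    (Tuple.monotone_sort t).strictMono_of_injective (ht.comp σ.injective)
  obtain ⟨a, b, hab⟩ := requ_interp n (t ∘ σ) hmono (z ∘ σ) (fun i => hz _)
  refine ⟨a, b, fun i => ?_⟩
  have := hab (σ.symm i)
  simpa using this

/-- Over-parameterization implies interpolation: for pairwise distinct inputs
`x₁, …, xₙ ∈ ℝ^d`, labels `y_i ∈ {−1, +1}`, and width `m ≥ n + 1`, there exist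
parameters `(a_j, w_j, b_j)` such that the one-hidden-layer ReQU network
`f(x) = ∑_j a_j (max{w_jᵀx + b_j, 0})²` correctly classifies every sample:
`y_i f(x_i) > 0` for all `i`. -/
theorem stmt14 (n d m : ℕ) (hm : n + 1 ≤ m)
    (x : Fin n → Fin d → ℝ) (hx : Function.Injective x)
    (y : Fin n → ℝ) (hy : ∀ i, y i = 1 ∨ y i = -1) :
    ∃ (a : Fin m → ℝ) (w : Fin m → Fin d → ℝ) (b : Fin m → ℝ),
      ∀ i, 0 < y i * ∑ j, a j * (max (∑ k, w j k * x i k + b j) 0) ^ 2 := by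
  obtain ⟨v, hv⟩ := exists_sep_dir x hx
  obtain ⟨a, b, hab⟩ := requ_interp' _ hv y hy
  have hnm : n ≤ m := by omega
  refine ⟨fun j => if h : (j : ℕ) < n then a ⟨j, h⟩ else 0, fun _ => v,
    fun j => if h : (j : ℕ) < n then b ⟨j, h⟩ else 0, fun i => ?_⟩
  have key : ∑ j : Fin m, (if h : (j : ℕ) < n then a ⟨j, h⟩ else 0) *
      (max (∑ k, v k * x i k + if h : (j : ℕ) < n then b ⟨j, h⟩ else 0) 0) ^ 2
      = ∑ j : Fin n, a j * (max (∑ k, v k * x i k + b j) 0) ^ 2 := by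
    rw [← Finset.sum_subset (Finset.subset_univ
        ((Finset.univ : Finset (Fin n)).map (Fin.castLEEmb hnm)))]
    · rw [Finset.sum_map]
      apply Finset.sum_congr rfl
      intro j' _
      simp [Fin.castLEEmb, Fin.castLE, j'.isLt]
    · intro j _ hj
      have : ¬ ((j : ℕ) < n) := by
        intro hlt
        exact hj (by simp [Fin.castLEEmb]; exact ⟨⟨j, hlt⟩, by simp [Fin.castLE]⟩)
      simp [this]
  rw [key]
  exact hab i
end
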